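/- arXiv:1710.02550 — 5 statements merged into one kernel-verified Lean document; each statement's English description precedes it below -/
import Mathlib

section
/- Let d ≥ 1 and n ≥ 0 be integers, let 0 ≤ k ≤ d−1, let r ≥ 0, and let λ be a nonzero real number. Writing Q₂^{(k)}(t,x) := (∂^k/∂x^k) Q₂(t,x), we have lim_{t↓0} t^{d−1} · e^{−λ²/(4t)} · (∂ⁿ/∂rⁿ)[Q₂^{(k)}(t, cos(√t·r)·cosh λ)] = 0 if k < d−1, while if k = d−1 the limit equals 2·(λ/(2·sinh λ))^d · (∂ⁿ/∂rⁿ) e^{−r²·λ·coth(λ)/4}. (Note that for t sufficiently small, cos(√t·r)·cosh λ > 1, so the expression is defined.) -/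
/-!
Write `a = arcosh x`. Induction on `k` gives `∂ₓᵏ Q₂(t, x) = e^{a²/4t} t^{-k} H_k(t, a)`, where
`H_k = amplitude k` is smooth in `(t, a)` for `a > 0` and
`H_k(0, a) = (a / (2 sinh a))^k · a / sinh a`. Along `x = cos θ · cosh λ` the analytic function
`a(θ)² − λ²` vanishes to second order at `θ = 0`, so it equals `θ² q(θ)` with
`q = phaseCoeff λ` analytic, and L'Hôpital gives `q(0) = −λ coth λ`. Putting `θ = √t r`, the
factor `e^{−λ²/4t}` cancels the singular part of the exponential and `t^k e^{−λ²/4t} ∂ₓᵏ Q₂`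
becomes `Φ(√t, r)`, where `Φ(s, r) = rescaledDeriv k λ (s, r) = e^{r² q(s r)/4} H_k(s², a(s r))`
is smooth in `(s, r)` across `s = 0`. Hence its `r`-derivatives are continuous there and tend to
`∂ᵣⁿ Φ(0, r)`; the remaining factor `t^{d−1−k}` tends to `0` unless `k = d − 1`.
-/

open Real Filter Set Topology

noncomputable section

/-- Inverse hyperbolic cosine on `[1, ∞)`. -/
def arccosh (x : ℝ) : ℝ := Real.log (x + Real.sqrt (x ^ 2 - 1))

/-- `Q₂(t,x) = (arccosh x/√(x²−1))·exp((arccosh x)²/(4t))`, for `x > 1`. -/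
def Q2 (t x : ℝ) : ℝ :=
  (arccosh x / Real.sqrt (x ^ 2 - 1)) * Real.exp ((arccosh x) ^ 2 / (4 * t))

open scoped ContDiff

section PartialSnd

variable {𝕜 E : Type*} [NontriviallyNormedField 𝕜] [NormedAddCommGroup E] [NormedSpace 𝕜 E]
  {F : 𝕜 × 𝕜 → E} {U : Set (𝕜 × 𝕜)}

def partialSnd (F : 𝕜 × 𝕜 → E) (p : 𝕜 × 𝕜) : E := fderiv 𝕜 F p (0, 1)

theorem DifferentiableAt.hasDerivAt_partialSnd {x y : 𝕜} (hF : DifferentiableAt 𝕜 F (x, y)) :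
    HasDerivAt (fun y' => F (x, y')) (partialSnd F (x, y)) y :=
  hF.hasFDerivAt.comp_hasDerivAt y ((hasDerivAt_const y x).prodMk (hasDerivAt_id y))

theorem ContDiffOn.partialSnd (hU : IsOpen U) (hF : ContDiffOn 𝕜 ∞ F U) :
    ContDiffOn 𝕜 ∞ (partialSnd F) U :=
  (hF.fderiv_of_isOpen hU (by simp)).clm_apply contDiffOn_const

theorem ContDiffOn.iterate_partialSnd (hU : IsOpen U) (hF : ContDiffOn 𝕜 ∞ F U) (n : ℕ) :
    ContDiffOn 𝕜 ∞ (_root_.partialSnd^[n] F) U := by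
  induction n with
  | zero => exact hF
  | succ n ih => rw [Function.iterate_succ_apply']; exact ih.partialSnd hU

theorem iteratedDeriv_eq_iterate_partialSnd (hU : IsOpen U) (hF : ContDiffOn 𝕜 ∞ F U) (n : ℕ)
    {x y : 𝕜} (hxy : (x, y) ∈ U) :
    iteratedDeriv n (fun y' => F (x, y')) y = (partialSnd^[n] F) (x, y) := by
  induction n generalizing y with
  | zero => rfl
  | succ n ih =>
    have hslice : ∀ᶠ y' in 𝓝 y, (x, y') ∈ U :=
      (continuous_const.prodMk continuous_id).continuousAt.preimage_mem_nhds (hU.mem_nhds hxy)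
    rw [iteratedDeriv_succ, Function.iterate_succ_apply',
      (eventuallyEq_of_mem hslice fun y' hy' => ih hy').deriv_eq]
    exact (((hF.iterate_partialSnd hU n).contDiffAt (hU.mem_nhds hxy)).differentiableAt
      (by simp)).hasDerivAt_partialSnd.deriv

end PartialSnd

theorem AnalyticAt.dslope {𝕜 E : Type*} [NontriviallyNormedField 𝕜] [NormedAddCommGroup E]
    [NormedSpace 𝕜 E] {f : 𝕜 → E} {a : 𝕜} (hf : AnalyticAt 𝕜 f a) :
    AnalyticAt 𝕜 (dslope f a) a :=
  let ⟨_, hp⟩ := hf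
  ⟨_, hp.has_fpower_series_dslope_fslope⟩

theorem eq_sub_sq_smul_dslope_dslope {𝕜 E : Type*} [NontriviallyNormedField 𝕜]
    [NormedAddCommGroup E] [NormedSpace 𝕜 E] {f : 𝕜 → E} {a : 𝕜} (hf : f a = 0)
    (hf' : deriv f a = 0) (b : 𝕜) :
    f b = (b - a) ^ 2 • dslope (dslope f a) a b := by
  rw [pow_two, mul_smul, sub_smul_dslope, dslope_same, hf', sub_zero, sub_smul_dslope, hf,
    sub_zero]

theorem div_sinh_abs (x : ℝ) : |x| / sinh |x| = x / sinh x := by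
  rcases abs_cases x with ⟨h, -⟩ | ⟨h, -⟩ <;> rw [h]
  rw [sinh_neg, neg_div_neg_eq]

def amplitude : ℕ → ℝ × ℝ → ℝ
  | 0 => fun p => p.2 / sinh p.2
  | k + 1 => fun p => (p.2 / 2 * amplitude k p + p.1 * partialSnd (amplitude k) p) / sinh p.2

theorem contDiffOn_amplitude (k : ℕ) : ContDiffOn ℝ ∞ (amplitude k) {p | 0 < p.2} := by
  have hopen : IsOpen {p : ℝ × ℝ | 0 < p.2} := isOpen_lt continuous_const continuous_snd
  have hsinh : ContDiffOn ℝ ∞ (fun p : ℝ × ℝ => sinh p.2) {p | 0 < p.2} :=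
    (contDiff_sinh.comp contDiff_snd).contDiffOn
  have hsinh_ne : ∀ p ∈ {p : ℝ × ℝ | 0 < p.2}, sinh p.2 ≠ 0 := fun p hp => (sinh_pos_iff.2 hp).ne'
  induction k with
  | zero => exact contDiff_snd.contDiffOn.div hsinh hsinh_ne
  | succ k ih =>
    exact ((((contDiff_snd.div_const 2).contDiffOn.mul ih).add
      (contDiff_fst.contDiffOn.mul (ih.partialSnd hopen))).div hsinh hsinh_ne)

theorem amplitude_zero_fst (k : ℕ) (a : ℝ) :
    amplitude k (0, a) = (a / sinh a / 2) ^ k * (a / sinh a) := by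
  induction k with
  | zero => simp [amplitude]
  | succ k ih =>
    simp only [amplitude, zero_mul, add_zero, ih, pow_succ]
    ring

theorem arccosh_eq_arcosh : arccosh = arcosh := rfl

theorem hasDerivAt_exp_mul_amplitude (k : ℕ) {t x : ℝ} (ht : 0 < t) (hx : 1 < x) :
    HasDerivAt (fun y => exp (arcosh y ^ 2 / (4 * t)) * (t ^ k)⁻¹ * amplitude k (t, arcosh y))
      (exp (arcosh x ^ 2 / (4 * t)) * (t ^ (k + 1))⁻¹ * amplitude (k + 1) (t, arcosh x)) x := by
  have ha := hasDerivAt_arcosh hx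
  rw [← sinh_arcosh hx.le] at ha
  have hpos : 0 < arcosh x := arcosh_pos hx
  have hexp := ((ha.pow 2).div_const (4 * t)).exp
  have hdiff : DifferentiableAt ℝ (amplitude k) (t, arcosh x) :=
    ((contDiffOn_amplitude k).contDiffAt
      ((isOpen_lt continuous_const continuous_snd).mem_nhds hpos)).differentiableAt (by simp)
  have hamp := hdiff.hasDerivAt_partialSnd.comp x ha
  refine ((hexp.mul_const (t ^ k)⁻¹).mul hamp).congr_deriv ?_
  have hs : sinh (arcosh x) ≠ 0 := (sinh_pos_iff.2 hpos).ne'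
  simp only [amplitude, Function.comp_apply, Pi.pow_apply]
  field_simp
  ring

theorem iteratedDeriv_Q2 (k : ℕ) {t x : ℝ} (ht : 0 < t) (hx : 1 < x) :
    iteratedDeriv k (Q2 t) x =
      exp (arcosh x ^ 2 / (4 * t)) * (t ^ k)⁻¹ * amplitude k (t, arcosh x) := by
  induction k generalizing x with
  | zero =>
    rw [iteratedDeriv_zero, Q2, arccosh_eq_arcosh, amplitude, ← sinh_arcosh hx.le, pow_zero,
      inv_one, mul_one, mul_comm]
  | succ k ih =>
    rw [iteratedDeriv_succ, (eventuallyEq_of_mem (Ioi_mem_nhds hx) fun y hy => ih hy).deriv_eq]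
    exact (hasDerivAt_exp_mul_amplitude k ht hx).deriv

section Phase

variable {lam : ℝ}

def arcoshCos (lam θ : ℝ) : ℝ := arcosh (cos θ * cosh lam)

-- `phaseCoeff lam θ = (arcoshCos lam θ ^ 2 - lam ^ 2) / θ ^ 2`, continued analytically to `θ = 0`.
def phaseCoeff (lam : ℝ) : ℝ → ℝ := dslope (dslope (fun θ => arcoshCos lam θ ^ 2 - lam ^ 2) 0) 0

theorem one_lt_cos_mul_cosh_zero (hlam : lam ≠ 0) : 1 < cos 0 * cosh lam := by
  simpa using one_lt_cosh.2 hlam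

theorem eventually_one_lt_cos_mul_cosh (hlam : lam ≠ 0) : ∀ᶠ θ in 𝓝 0, 1 < cos θ * cosh lam :=
  continuousAt_const.eventually_lt (by fun_prop) (one_lt_cos_mul_cosh_zero hlam)

theorem arcoshCos_zero : arcoshCos lam 0 = |lam| := by
  rw [arcoshCos, cos_zero, one_mul, ← cosh_abs, arcosh_cosh (abs_nonneg lam)]

theorem analyticAt_arcoshCos {θ : ℝ} (h : 1 < cos θ * cosh lam) :
    AnalyticAt ℝ (arcoshCos lam) θ :=
  (analyticAt_arcosh h).comp (f := fun θ => cos θ * cosh lam) (analyticAt_cos.mul analyticAt_const)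

theorem hasDerivAt_arcoshCos {θ : ℝ} (h : 1 < cos θ * cosh lam) :
    HasDerivAt (arcoshCos lam) (-(sin θ * cosh lam) / sinh (arcoshCos lam θ)) θ := by
  have hd := (hasDerivAt_arcosh h).comp θ ((hasDerivAt_cos θ).mul_const (cosh lam))
  rw [← sinh_arcosh h.le] at hd
  refine hd.congr_deriv ?_
  rw [arcoshCos]
  ring

theorem hasDerivAt_sq_arcoshCos_sub_sq {θ : ℝ} (h : 1 < cos θ * cosh lam) :
    HasDerivAt (fun θ => arcoshCos lam θ ^ 2 - lam ^ 2)
      (2 * arcoshCos lam θ * (-(sin θ * cosh lam) / sinh (arcoshCos lam θ))) θ := by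
  simpa using ((hasDerivAt_arcoshCos h).pow 2).sub_const (lam ^ 2)

theorem sq_arcoshCos_sub_sq (hlam : lam ≠ 0) (θ : ℝ) :
    arcoshCos lam θ ^ 2 - lam ^ 2 = θ ^ 2 * phaseCoeff lam θ := by
  have h0 : arcoshCos lam 0 ^ 2 - lam ^ 2 = 0 := by rw [arcoshCos_zero, sq_abs, sub_self]
  have hd := hasDerivAt_sq_arcoshCos_sub_sq (one_lt_cos_mul_cosh_zero hlam)
  simp only [sin_zero, zero_mul, neg_zero, zero_div, mul_zero] at hd
  rw [phaseCoeff]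
  simpa using
    eq_sub_sq_smul_dslope_dslope (f := fun θ => arcoshCos lam θ ^ 2 - lam ^ 2) h0 hd.deriv θ

theorem analyticAt_phaseCoeff (hlam : lam ≠ 0) : AnalyticAt ℝ (phaseCoeff lam) 0 :=
  (((analyticAt_arcoshCos (one_lt_cos_mul_cosh_zero hlam)).pow 2).sub
    analyticAt_const).dslope.dslope

theorem tendsto_sq_arcoshCos_sub_sq_div_sq (hlam : lam ≠ 0) :
    Tendsto (fun θ => (arcoshCos lam θ ^ 2 - lam ^ 2) / θ ^ 2) (𝓝[≠] 0)
      (𝓝 (-(lam * (cosh lam / sinh lam)))) := by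
  have h0 := one_lt_cos_mul_cosh_zero hlam
  have ha := (analyticAt_arcoshCos h0).continuousAt
  have hsinh : sinh (arcoshCos lam 0) ≠ 0 := by
    rw [arcoshCos_zero]
    exact (sinh_pos_iff.2 (abs_pos.2 hlam)).ne'
  have hratio : ContinuousAt
      (fun θ => -cosh lam * (arcoshCos lam θ / sinh (arcoshCos lam θ)) * sinc θ) 0 :=
    (continuousAt_const.mul (ha.div (continuous_sinh.continuousAt.comp ha) hsinh)).mul
      continuous_sinc.continuousAt
  have hlim := hratio.tendsto.mono_left (nhdsWithin_le_nhds (s := {0}ᶜ))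
  rw [arcoshCos_zero, div_sinh_abs, sinc_zero, mul_one, neg_mul, ← mul_div_assoc,
    mul_comm (cosh lam), mul_div_assoc] at hlim
  refine HasDerivAt.lhopital_zero_nhdsNE (g := fun θ : ℝ => θ ^ 2) (g' := fun θ => 2 * θ)
    (nhdsWithin_le_nhds ((eventually_one_lt_cos_mul_cosh hlam).mono
      fun θ h => hasDerivAt_sq_arcoshCos_sub_sq h))
    (Eventually.of_forall fun θ => by simpa using hasDerivAt_pow 2 θ)
    (eventually_nhdsWithin_of_forall fun θ hθ => mul_ne_zero two_ne_zero hθ)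
    (by simpa [arcoshCos_zero] using
      (hasDerivAt_sq_arcoshCos_sub_sq h0).continuousAt.tendsto.mono_left nhdsWithin_le_nhds)
    (by simpa using ((continuous_pow 2).tendsto (0 : ℝ)).mono_left nhdsWithin_le_nhds)
    (hlim.congr' ?_)
  filter_upwards [self_mem_nhdsWithin] with θ hθ
  rw [sinc_of_ne_zero hθ]
  ring

theorem phaseCoeff_zero (hlam : lam ≠ 0) :
    phaseCoeff lam 0 = -(lam * (cosh lam / sinh lam)) := by
  refine tendsto_nhds_unique ?_ (tendsto_sq_arcoshCos_sub_sq_div_sq hlam)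
  refine ((analyticAt_phaseCoeff hlam).continuousAt.tendsto.mono_left nhdsWithin_le_nhds).congr' ?_
  filter_upwards [self_mem_nhdsWithin] with θ hθ
  rw [sq_arcoshCos_sub_sq hlam, mul_div_cancel_left₀ _ (pow_ne_zero 2 hθ)]

end Phase

section Rescaled

variable {lam : ℝ}

def phaseDomain (lam : ℝ) : Set ℝ := {θ | 1 < cos θ * cosh lam ∧ AnalyticAt ℝ (phaseCoeff lam) θ}

theorem isOpen_phaseDomain : IsOpen (phaseDomain lam) :=
  (isOpen_lt continuous_const (continuous_cos.mul continuous_const)).inter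
    (isOpen_analyticAt ℝ (phaseCoeff lam))

theorem zero_mem_phaseDomain (hlam : lam ≠ 0) : 0 ∈ phaseDomain lam :=
  ⟨one_lt_cos_mul_cosh_zero hlam, analyticAt_phaseCoeff hlam⟩

def rescaledDomain (lam : ℝ) : Set (ℝ × ℝ) := (fun p => p.1 * p.2) ⁻¹' phaseDomain lam

theorem isOpen_rescaledDomain : IsOpen (rescaledDomain lam) :=
  isOpen_phaseDomain.preimage (continuous_fst.mul continuous_snd)

theorem zero_mk_mem_rescaledDomain (hlam : lam ≠ 0) (r : ℝ) : (0, r) ∈ rescaledDomain lam := by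
  simpa [rescaledDomain] using zero_mem_phaseDomain hlam

def rescaledDeriv (k : ℕ) (lam : ℝ) (p : ℝ × ℝ) : ℝ :=
  exp (p.2 ^ 2 * phaseCoeff lam (p.1 * p.2) / 4) * amplitude k (p.1 ^ 2, arcoshCos lam (p.1 * p.2))

theorem contDiffOn_rescaledDeriv (k : ℕ) :
    ContDiffOn ℝ ∞ (rescaledDeriv k lam) (rescaledDomain lam) := by
  have hmul : ContDiff ℝ ∞ (fun p : ℝ × ℝ => p.1 * p.2) := contDiff_fst.mul contDiff_snd
  have hq : ContDiffOn ℝ ∞ (phaseCoeff lam) (phaseDomain lam) := fun θ hθ =>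
    hθ.2.contDiffAt.contDiffWithinAt
  have ha : ContDiffOn ℝ ∞ (arcoshCos lam) (phaseDomain lam) := fun θ hθ =>
    (analyticAt_arcoshCos hθ.1).contDiffAt.contDiffWithinAt
  refine (contDiff_exp.comp_contDiffOn (((contDiff_snd.pow 2).contDiffOn.mul
    (hq.comp hmul.contDiffOn fun p hp => hp)).div_const 4)).mul
      ((contDiffOn_amplitude k).comp ((contDiff_fst.pow 2).contDiffOn.prodMk
        (ha.comp hmul.contDiffOn fun p hp => hp)) fun p hp => arcosh_pos hp.1)

theorem rescaledDeriv_zero_fst (k : ℕ) (hlam : lam ≠ 0) (r : ℝ) :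
    rescaledDeriv k lam (0, r) = (lam / sinh lam / 2) ^ k * (lam / sinh lam) *
      exp (-(r ^ 2 * lam * (cosh lam / sinh lam)) / 4) := by
  rw [rescaledDeriv, zero_mul, phaseCoeff_zero hlam, arcoshCos_zero, zero_pow two_ne_zero,
    amplitude_zero_fst, div_sinh_abs]
  ring_nf

theorem iteratedDeriv_Q2_cos_mul_cosh (k : ℕ) (hlam : lam ≠ 0) {t r : ℝ} (ht : 0 < t)
    (h : 1 < cos (√t * r) * cosh lam) :
    iteratedDeriv k (Q2 t) (cos (√t * r) * cosh lam) =
      (t ^ k)⁻¹ * exp (lam ^ 2 / (4 * t)) * rescaledDeriv k lam (√t, r) := by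
  have hsq : √t ^ 2 = t := sq_sqrt ht.le
  have hphase : arcosh (cos (√t * r) * cosh lam) ^ 2 / (4 * t) =
      lam ^ 2 / (4 * t) + r ^ 2 * phaseCoeff lam (√t * r) / 4 := by
    have := sq_arcoshCos_sub_sq hlam (√t * r)
    rw [mul_pow, hsq, arcoshCos] at this
    field_simp
    linear_combination this
  rw [iteratedDeriv_Q2 k ht h, hphase, exp_add, rescaledDeriv, hsq, arcoshCos]
  ring

theorem tendsto_sqrt_mk_nhdsGT_zero (r : ℝ) :
    Tendsto (fun t : ℝ => (√t, r)) (𝓝[>] 0) (𝓝 (0, r)) := by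
  simpa using ((continuous_sqrt.prodMk continuous_const).tendsto (0 : ℝ)).mono_left
    nhdsWithin_le_nhds

theorem eventually_scaled_iteratedDeriv_eq (k n : ℕ) (hlam : lam ≠ 0) (r : ℝ) :
    (fun t => t ^ k * exp (-lam ^ 2 / (4 * t)) *
        iteratedDeriv n (fun r => iteratedDeriv k (Q2 t) (cos (√t * r) * cosh lam)) r) =ᶠ[𝓝[>] 0]
      fun t => (partialSnd^[n] (rescaledDeriv k lam)) (√t, r) := by
  filter_upwards [self_mem_nhdsWithin, tendsto_sqrt_mk_nhdsGT_zero r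
    (isOpen_rescaledDomain.mem_nhds (zero_mk_mem_rescaledDomain hlam r))] with t ht hmem
  have hslice : ∀ᶠ r' in 𝓝 r, (√t, r') ∈ rescaledDomain lam :=
    (continuous_const.prodMk continuous_id).continuousAt.preimage_mem_nhds
      (isOpen_rescaledDomain.mem_nhds hmem)
  have heq : (fun r' => iteratedDeriv k (Q2 t) (cos (√t * r') * cosh lam)) =ᶠ[𝓝 r]
      fun r' => (t ^ k)⁻¹ * exp (lam ^ 2 / (4 * t)) * rescaledDeriv k lam (√t, r') :=
    hslice.mono fun r' hr' => iteratedDeriv_Q2_cos_mul_cosh k hlam ht hr'.1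
  rw [(heq.iteratedDeriv n).eq_of_nhds, iteratedDeriv_const_mul_field,
    iteratedDeriv_eq_iterate_partialSnd isOpen_rescaledDomain (contDiffOn_rescaledDeriv k) n hmem,
    neg_div, exp_neg]
  have : t ^ k ≠ 0 := pow_ne_zero k (ne_of_gt ht)
  field_simp

theorem tendsto_scaled_iteratedDeriv (k n : ℕ) (hlam : lam ≠ 0) (r : ℝ) :
    Tendsto (fun t => t ^ k * exp (-lam ^ 2 / (4 * t)) *
        iteratedDeriv n (fun r => iteratedDeriv k (Q2 t) (cos (√t * r) * cosh lam)) r)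
      (𝓝[>] 0) (𝓝 ((lam / sinh lam / 2) ^ k * (lam / sinh lam) *
        iteratedDeriv n (fun r => exp (-(r ^ 2 * lam * (cosh lam / sinh lam)) / 4)) r)) := by
  have hsmooth := (contDiffOn_rescaledDeriv (lam := lam) k).iterate_partialSnd
    isOpen_rescaledDomain n
  have hmem := zero_mk_mem_rescaledDomain hlam r
  refine Tendsto.congr' (eventually_scaled_iteratedDeriv_eq k n hlam r).symm ?_
  rw [← iteratedDeriv_const_mul_field, ← funext (rescaledDeriv_zero_fst k hlam),
    iteratedDeriv_eq_iterate_partialSnd isOpen_rescaledDomain (contDiffOn_rescaledDeriv k) n hmem]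
  exact (hsmooth.continuousOn.continuousAt (isOpen_rescaledDomain.mem_nhds hmem)).tendsto.comp
    (tendsto_sqrt_mk_nhdsGT_zero r)

end Rescaled

theorem statement4_general (d k n : ℕ) (hd : 1 ≤ d) (hk : k ≤ d - 1) (r lam : ℝ)
    (hlam : lam ≠ 0) :
    Tendsto
      (fun t : ℝ => t ^ (d - 1) * Real.exp (-lam ^ 2 / (4 * t)) *
        iteratedDeriv n
          (fun r : ℝ =>
            iteratedDeriv k (fun x => Q2 t x) (Real.cos (Real.sqrt t * r) * Real.cosh lam)) r)
      (nhdsWithin 0 (Set.Ioi 0))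
      (nhds (if k < d - 1 then 0
        else 2 * (lam / (2 * Real.sinh lam)) ^ d *
          iteratedDeriv n
            (fun r : ℝ =>
              Real.exp (-(r ^ 2 * lam * (Real.cosh lam / Real.sinh lam)) / 4)) r)) := by
  have hpow : Tendsto (fun t : ℝ => t ^ (d - 1 - k)) (𝓝[>] 0) (𝓝 (0 ^ (d - 1 - k))) :=
    ((continuous_pow _).tendsto 0).mono_left nhdsWithin_le_nhds
  convert hpow.mul (tendsto_scaled_iteratedDeriv k n hlam r) using 2 with t
  · rw [← mul_assoc, ← mul_assoc, ← pow_add, Nat.sub_add_cancel hk]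
  · split_ifs with hlt
    · rw [zero_pow (by omega), zero_mul]
    · rw [show d - 1 - k = 0 by omega, show d = k + 1 by omega]
      ring

/-- Proposition `p.drq2`: for `d ≥ 1`, `0 ≤ k ≤ d−1`, `r ≥ 0`, `λ ≠ 0`,
`lim_{t↓0} t^{d−1} e^{−λ²/(4t)} ∂ⁿ/∂rⁿ [Q₂^{(k)}(t, cos(√t r)·cosh λ)]` equals `0` if
`k < d−1`, and equals `2(λ/(2 sinh λ))^d ∂ⁿ/∂rⁿ e^{−r²λ coth λ/4}` if `k = d−1`. -/
theorem statement4 (d k n : ℕ) (hd : 1 ≤ d) (hk : k ≤ d - 1) (r lam : ℝ)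
    (hr : 0 ≤ r) (hlam : lam ≠ 0) :
    Tendsto
      (fun t : ℝ => t ^ (d - 1) * Real.exp (-lam ^ 2 / (4 * t)) *
        iteratedDeriv n
          (fun r : ℝ =>
            iteratedDeriv k (fun x => Q2 t x) (Real.cos (Real.sqrt t * r) * Real.cosh lam)) r)
      (nhdsWithin 0 (Set.Ioi 0))
      (nhds (if k < d - 1 then 0
        else 2 * (lam / (2 * Real.sinh lam)) ^ d *
          iteratedDeriv n
            (fun r : ℝ =>
              Real.exp (-(r ^ 2 * lam * (Real.cosh lam / Real.sinh lam)) / 4)) r)) :=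
  statement4_general d k n hd hk r lam hlam
end
end

section
/- For each integer n ≥ 0 there exists a constant Cₙ < ∞ such that for all x ∈ (1,∞) and t ∈ (0,1): |(∂ⁿ/∂xⁿ) Q₂(t,x)| ≤ (Cₙ / tⁿ) · exp(arccosh²(x)/(4t)) · (arccosh x)^{n+1} / (x²−1)^{(n+1)/2}. -/
open Real Filter Set Topology

noncomputable section

namespace S11
open FormalMultilinearSeries Polynomial


lemma sq_sub_pos {x : ℝ} (hx : 1 < x) : 0 < x ^ 2 - 1 := by nlinarith

lemma sqrt_pos' {x : ℝ} (hx : 1 < x) : 0 < Real.sqrt (x ^ 2 - 1) :=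
  Real.sqrt_pos.2 (sq_sub_pos hx)

lemma sqrt_sq' {x : ℝ} (hx : 1 < x) : Real.sqrt (x ^ 2 - 1) ^ 2 = x ^ 2 - 1 :=
  Real.sq_sqrt (le_of_lt (sq_sub_pos hx))

lemma inner_gt_one {x : ℝ} (hx : 1 < x) : 1 < x + Real.sqrt (x ^ 2 - 1) := by
  have := sqrt_pos' hx; linarith

lemma arccosh_pos {x : ℝ} (hx : 1 < x) : 0 < arccosh x :=
  Real.log_pos (inner_gt_one hx)

lemma exp_arccosh {x : ℝ} (hx : 1 < x) :
    Real.exp (arccosh x) = x + Real.sqrt (x ^ 2 - 1) :=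
  Real.exp_log (by linarith [inner_gt_one hx])

lemma exp_neg_arccosh {x : ℝ} (hx : 1 < x) :
    Real.exp (-arccosh x) = x - Real.sqrt (x ^ 2 - 1) := by
  have h1 := exp_arccosh hx
  have h2 : (x + Real.sqrt (x ^ 2 - 1)) * (x - Real.sqrt (x ^ 2 - 1)) = 1 := by
    have := sqrt_sq' hx; nlinarith
  have h3 : Real.exp (-arccosh x) * Real.exp (arccosh x) = 1 := by
    rw [← Real.exp_add]; simp
  have h4 : (0:ℝ) < x + Real.sqrt (x ^ 2 - 1) := by linarith [inner_gt_one hx]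
  field_simp [h1] at h3 ⊢
  nlinarith [h3]

lemma cosh_arccosh {x : ℝ} (hx : 1 < x) : Real.cosh (arccosh x) = x := by
  rw [Real.cosh_eq, exp_arccosh hx, exp_neg_arccosh hx]; ring

lemma sinh_arccosh {x : ℝ} (hx : 1 < x) :
    Real.sinh (arccosh x) = Real.sqrt (x ^ 2 - 1) := by
  rw [Real.sinh_eq, exp_arccosh hx, exp_neg_arccosh hx]; ring

lemma hasDerivAt_arccosh {x : ℝ} (hx : 1 < x) :
    HasDerivAt arccosh (1 / Real.sqrt (x ^ 2 - 1)) x := by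
  have hS := sqrt_pos' hx
  have hS2 := sqrt_sq' hx
  have h1 : HasDerivAt (fun y : ℝ => y ^ 2 - 1) (2 * x) x := by
    simpa using ((hasDerivAt_pow 2 x).sub_const 1)
  have h2 : HasDerivAt (fun y : ℝ => Real.sqrt (y ^ 2 - 1))
      (1 / (2 * Real.sqrt (x ^ 2 - 1)) * (2 * x)) x :=
    (Real.hasDerivAt_sqrt (ne_of_gt (sq_sub_pos hx))).comp x h1
  have h3 : HasDerivAt (fun y : ℝ => y + Real.sqrt (y ^ 2 - 1))
      (1 + 1 / (2 * Real.sqrt (x ^ 2 - 1)) * (2 * x)) x := (hasDerivAt_id x).add h2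
  have h4 := (Real.hasDerivAt_log (by linarith [inner_gt_one hx] : x + Real.sqrt (x ^ 2 - 1) ≠ 0)).comp x h3
  refine h4.congr_deriv ?_
  have hxS : 0 < x + Real.sqrt (x ^ 2 - 1) := by linarith [inner_gt_one hx]
  field_simp
  nlinarith [hS2]

lemma continuousAt_arccosh_one : ContinuousAt arccosh 1 := by
  have h1 : ContinuousAt (fun y : ℝ => y + Real.sqrt (y ^ 2 - 1)) 1 := by
    exact (continuousAt_id).add (Real.continuous_sqrt.continuousAt.comp
      (by fun_prop))
  apply (Real.continuousAt_log ?_).comp h1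
  simp

lemma arccosh_one : arccosh 1 = 0 := by simp [arccosh]



def kapc : ℕ → ℝ := fun n => 1 / (Nat.factorial (2 * n + 1) : ℝ)

def kap : ℝ → ℝ := ofScalarsSum (E := ℝ) kapc

lemma kapc_pos (n : ℕ) : 0 < kapc n := by
  have := Nat.factorial_pos (2 * n + 1)
  have : (0:ℝ) < (Nat.factorial (2 * n + 1) : ℝ) := by exact_mod_cast this
  simp only [kapc]
  positivity

lemma kap_radius : (ofScalars ℝ kapc).radius = ⊤ := by
  apply ofScalars_radius_eq_top_of_tendsto
  · exact Eventually.of_forall fun n => ne_of_gt (kapc_pos n)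
  · have hb : ∀ n : ℕ, ‖kapc (n + 1)‖ / ‖kapc n‖ ≤ 1 / (n + 1) := by
      intro n
      have he : 2 * (n + 1) + 1 = (2 * n + 3) := by ring
      have h1 : kapc (n+1) = 1 / (Nat.factorial (2 * n + 3) : ℝ) := by
        simp only [kapc, he]
      have h2 : (Nat.factorial (2*n+3) : ℝ) = (2*n+3) * ((2*n+2) * (Nat.factorial (2*n+1) : ℝ)) := by
        have e1 : 2*n+3 = (2*n+2) + 1 := by ring
        have e2 : 2*n+2 = (2*n+1) + 1 := by ring
        rw [e1, Nat.factorial_succ, e2, Nat.factorial_succ]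
        push_cast
        ring
      rw [h1]
      have hf1 : (0:ℝ) < (Nat.factorial (2*n+1) : ℝ) := by exact_mod_cast Nat.factorial_pos _
      have hf3 : (0:ℝ) < (Nat.factorial (2*n+3) : ℝ) := by exact_mod_cast Nat.factorial_pos _
      have hk : ‖kapc n‖ = 1 / (Nat.factorial (2*n+1) : ℝ) := by
        simp only [kapc]
        rw [norm_div, norm_one, Real.norm_natCast]
      rw [hk, norm_div, norm_one, Real.norm_natCast]
      have he2 : 1 / (Nat.factorial (2*n+3) : ℝ) / (1 / (Nat.factorial (2*n+1) : ℝ))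
          = (Nat.factorial (2*n+1) : ℝ) / (Nat.factorial (2*n+3) : ℝ) := by
        field_simp
      rw [he2, div_le_div_iff₀ hf3 (by positivity), h2]
      have hn : (0:ℝ) ≤ n := Nat.cast_nonneg n
      nlinarith [hf1]
    have h0 : ∀ n : ℕ, 0 ≤ ‖kapc (n + 1)‖ / ‖kapc n‖ := fun n => by positivity
    have := squeeze_zero h0 hb tendsto_one_div_add_atTop_nhds_zero_nat
    simpa [Nat.succ_eq_add_one] using this

lemma analyticAt_kap (v : ℝ) : AnalyticAt ℝ kap v := by
  have h := (ofScalars ℝ kapc).hasFPowerSeriesOnBall (by rw [kap_radius]; exact ENNReal.zero_lt_top)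
  exact h.analyticAt_of_mem (by simp [kap_radius, EMetric.mem_ball, edist_lt_top])

lemma contDiff_kap : ContDiff ℝ (⊤ : ℕ∞) kap :=
  contDiff_iff_contDiffAt.2 fun v => (analyticAt_kap v).contDiffAt

lemma kap_eq_tsum (v : ℝ) : kap v = ∑' n : ℕ, v ^ n / (Nat.factorial (2 * n + 1) : ℝ) := by
  rw [kap, ofScalars_sum_eq]
  congr 1; ext n
  simp [kapc, smul_eq_mul]
  ring

lemma kap_spec (u : ℝ) : u * kap (u ^ 2) = Real.sinh u := by
  rw [kap_eq_tsum, Real.sinh_eq_tsum, ← tsum_mul_left]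
  congr 1; ext n
  rw [← pow_mul, pow_succ', mul_div_assoc]

lemma kap_zero : kap 0 = 1 := by
  rw [kap, ofScalarsSum_zero]; simp [kapc]



/-- derivative of √(x²−1) -/
lemma hasDerivAt_sqrt' {x : ℝ} (hx : 1 < x) :
    HasDerivAt (fun y : ℝ => Real.sqrt (y ^ 2 - 1)) (x / Real.sqrt (x ^ 2 - 1)) x := by
  have h1 : HasDerivAt (fun y : ℝ => y ^ 2 - 1) (2 * x) x := by
    simpa using ((hasDerivAt_pow 2 x).sub_const 1)
  have h2 := (Real.hasDerivAt_sqrt (ne_of_gt (sq_sub_pos hx))).comp x h1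
  refine h2.congr_deriv ?_
  have hS := sqrt_pos' hx
  field_simp

def BB : ℝ → ℝ := fun x => arccosh x ^ 2 / 4

def D (m : ℕ) : ℝ → ℝ := iteratedDeriv m BB

lemma hasDerivAt_BB {x : ℝ} (hx : 1 < x) :
    HasDerivAt BB (arccosh x / (2 * Real.sqrt (x ^ 2 - 1))) x := by
  have h := ((hasDerivAt_arccosh hx).pow 2).div_const 4
  refine h.congr_deriv ?_
  have hS := sqrt_pos' hx
  field_simp
  ring

def PP : ℕ → Polynomial ℝ × Polynomial ℝ
  | 0 => (Polynomial.C (1/2 : ℝ), 0)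
  | (k+1) =>
    ((X ^ 2 - 1) * (PP k).1.derivative - Polynomial.C (2 * (k:ℝ) + 1) * X * (PP k).1,
     (PP k).1 + (X ^ 2 - 1) * (PP k).2.derivative - Polynomial.C (2 * (k:ℝ)) * X * (PP k).2)

def rep (k : ℕ) (x : ℝ) : ℝ :=
  ((PP k).1.eval x * arccosh x + (PP k).2.eval x * Real.sqrt (x ^ 2 - 1))
    / Real.sqrt (x ^ 2 - 1) ^ (2 * k + 1)

lemma rep_deriv (k : ℕ) {x : ℝ} (hx : 1 < x) :
    HasDerivAt (rep k) (rep (k+1) x) x := by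
  have hS := sqrt_pos' hx
  have hS2 := sqrt_sq' hx
  have hSne := ne_of_gt hS
  have hP : HasDerivAt (fun y => (PP k).1.eval y) ((PP k).1.derivative.eval x) x :=
    (PP k).1.hasDerivAt x
  have hQ : HasDerivAt (fun y => (PP k).2.eval y) ((PP k).2.derivative.eval x) x :=
    (PP k).2.hasDerivAt x
  have hA := hasDerivAt_arccosh hx
  have hsq := hasDerivAt_sqrt' hx
  have hN := (hP.mul hA).add (hQ.mul hsq)
  have hDen := hsq.pow (2*k+1)
  have hpos : Real.sqrt (x ^ 2 - 1) ^ (2*k+1) ≠ 0 := by positivity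
  have hquot := hN.div hDen hpos
  have := hquot
  unfold rep
  refine hquot.congr_deriv ?_
  simp only [PP]
  simp only [Polynomial.eval_add, Polynomial.eval_sub, Polynomial.eval_mul, Polynomial.eval_pow,
    Polynomial.eval_C, Polynomial.eval_X, Polynomial.eval_one]
  simp only [Pi.add_apply, Pi.mul_apply, Pi.pow_apply]
  push_cast
  set S := Real.sqrt (x ^ 2 - 1) with hSdef
  rw [← hS2]
  field_simp
  ring


lemma D_one {x : ℝ} (hx : 1 < x) :
    D 1 x = arccosh x / (2 * Real.sqrt (x ^ 2 - 1)) := by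
  have : D 1 = deriv BB := by
    funext y; rw [D, iteratedDeriv_one]
  rw [this, (hasDerivAt_BB hx).deriv]

lemma D_eq_rep (k : ℕ) : ∀ {x : ℝ}, 1 < x → D (k+1) x = rep k x := by
  induction k with
  | zero =>
    intro x hx
    rw [D_one hx]
    have hS := sqrt_pos' hx
    simp [rep, PP]
    field_simp
  | succ k ih =>
    intro x hx
    have hstep : D (k+2) x = deriv (D (k+1)) x := by
      rw [D, iteratedDeriv_succ]; rfl
    rw [hstep]
    have heq : D (k+1) =ᶠ[𝓝 x] rep k :=
      Filter.eventuallyEq_of_mem (isOpen_Ioi.mem_nhds hx) (fun y hy => ih hy)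
    rw [heq.deriv_eq, (rep_deriv k hx).deriv]

lemma D_hasDeriv {m : ℕ} (hm : 1 ≤ m) {x : ℝ} (hx : 1 < x) :
    HasDerivAt (D m) (D (m+1) x) x := by
  obtain ⟨k, rfl⟩ : ∃ k, m = k + 1 := ⟨m - 1, (Nat.succ_pred_eq_of_pos hm).symm⟩
  have heq : D (k+1) =ᶠ[𝓝 x] rep k :=
    Filter.eventuallyEq_of_mem (isOpen_Ioi.mem_nhds hx) (fun y hy => D_eq_rep k hy)
  have h := (rep_deriv k hx).congr_of_eventuallyEq heq
  rwa [← D_eq_rep (k+1) hx] at h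

lemma aux_deg (R : Polynomial ℝ) :
    (((X:Polynomial ℝ) ^ 2 - 1) * R.derivative).natDegree ≤ R.natDegree + 1 := by
  rcases Nat.eq_zero_or_pos R.natDegree with h0 | hpos
  · obtain ⟨a, rfl⟩ := Polynomial.natDegree_eq_zero.1 h0
    simp
  · calc (((X:Polynomial ℝ) ^ 2 - 1) * R.derivative).natDegree
        ≤ ((X:Polynomial ℝ) ^ 2 - 1).natDegree + R.derivative.natDegree :=
          Polynomial.natDegree_mul_le
      _ ≤ 2 + (R.natDegree - 1) := by
          gcongr
          · have : ((X:Polynomial ℝ) ^ 2 - 1).natDegree = 2 := by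
              rw [show ((X:Polynomial ℝ) ^ 2 - 1) = X ^ 2 - Polynomial.C 1 by simp]
              exact Polynomial.natDegree_X_pow_sub_C
            exact this.le
          · exact Polynomial.natDegree_derivative_le R
      _ ≤ R.natDegree + 1 := by omega

lemma deg_PP (k : ℕ) :
    (PP k).1.natDegree ≤ k ∧ ((PP k).2 = 0 ∨ (PP k).2.natDegree + 1 ≤ k) := by
  induction k with
  | zero =>
    constructor
    · simp [PP]
    · left; rfl
  | succ k ih =>
    obtain ⟨hP, hQ⟩ := ih
    constructor
    · calc (PP (k+1)).1.natDegree
          ≤ max (((X^2-1:Polynomial ℝ) * (PP k).1.derivative).natDegree)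
              ((Polynomial.C (2*(k:ℝ)+1) * X * (PP k).1).natDegree) := by
            rw [show (PP (k+1)).1 = (X^2-1:Polynomial ℝ) * (PP k).1.derivative
                - Polynomial.C (2*(k:ℝ)+1) * X * (PP k).1 from rfl]
            exact Polynomial.natDegree_sub_le _ _
        _ ≤ k + 1 := by
            apply max_le
            · exact le_trans (aux_deg _) (by omega)
            · calc (Polynomial.C (2*(k:ℝ)+1) * X * (PP k).1).natDegree
                  ≤ (Polynomial.C (2*(k:ℝ)+1) * X).natDegree + (PP k).1.natDegree :=
                    Polynomial.natDegree_mul_le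
                _ ≤ 1 + k := by
                    gcongr
                    refine le_trans Polynomial.natDegree_mul_le ?_
                    rw [Polynomial.natDegree_C]
                    simpa using Polynomial.natDegree_X_le
                _ = k + 1 := by omega
    · right
      have hgoal : (PP (k+1)).2.natDegree ≤ k := by
        rw [show (PP (k+1)).2 = (PP k).1 + (X^2-1:Polynomial ℝ) * (PP k).2.derivative
            - Polynomial.C (2*(k:ℝ)) * X * (PP k).2 from rfl]
        rcases hQ with h0 | hdeg
        · rw [h0]; simp [hP]
        · apply le_trans (Polynomial.natDegree_sub_le _ _)
          apply max_le
          · apply le_trans (Polynomial.natDegree_add_le _ _)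
            apply max_le hP
            exact le_trans (aux_deg _) (by omega)
          · calc (Polynomial.C (2*(k:ℝ)) * X * (PP k).2).natDegree
                ≤ (Polynomial.C (2*(k:ℝ)) * X).natDegree + (PP k).2.natDegree :=
                  Polynomial.natDegree_mul_le
              _ ≤ 1 + (PP k).2.natDegree := by
                  gcongr
                  refine le_trans Polynomial.natDegree_mul_le ?_
                  rw [Polynomial.natDegree_C]
                  simpa using Polynomial.natDegree_X_le
              _ ≤ k := by omega
      omega

lemma poly_bound (p : Polynomial ℝ) (d : ℕ) (hd : p.natDegree ≤ d) :
    ∃ C, 0 ≤ C ∧ ∀ x : ℝ, 1 ≤ x → |p.eval x| ≤ C * x ^ d := by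
  refine ⟨∑ i ∈ Finset.range (d+1), |p.coeff i|, by positivity, fun x hx => ?_⟩
  have hx0 : (0:ℝ) ≤ x := by linarith
  rw [Polynomial.eval_eq_sum_range' (lt_of_le_of_lt hd (Nat.lt_succ_self d))]
  calc |∑ i ∈ Finset.range (d+1), p.coeff i * x ^ i|
      ≤ ∑ i ∈ Finset.range (d+1), |p.coeff i * x ^ i| :=
        Finset.abs_sum_le_sum_abs _ _
    _ ≤ ∑ i ∈ Finset.range (d+1), |p.coeff i| * x ^ d := by
        apply Finset.sum_le_sum
        intro i hi
        rw [abs_mul, abs_pow, abs_of_nonneg hx0]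
        have : x ^ i ≤ x ^ d :=
          pow_le_pow_right₀ hx (Nat.lt_succ_iff.1 (Finset.mem_range.1 hi))
        exact mul_le_mul_of_nonneg_left this (abs_nonneg _)
    _ = (∑ i ∈ Finset.range (d+1), |p.coeff i|) * x ^ d := (Finset.sum_mul _ _ _).symm


lemma D_large (k : ℕ) : ∃ C, 0 ≤ C ∧ ∀ x : ℝ, 2 ≤ x →
    |D (k+1) x| ≤ C * (arccosh x / Real.sqrt (x ^ 2 - 1)) ^ (k+1) := by
  obtain ⟨hPdeg, hQdeg⟩ := deg_PP k
  obtain ⟨Cp, hCp0, hCp⟩ := poly_bound (PP k).1 k hPdeg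
  obtain ⟨Cq, hCq0, hCq⟩ : ∃ Cq, 0 ≤ Cq ∧ ∀ x : ℝ, 2 ≤ x →
      |(PP k).2.eval x| * x ≤ Cq * x ^ k := by
    rcases hQdeg with h0 | hdeg
    · exact ⟨0, le_rfl, fun x hx => by simp [h0]⟩
    · obtain ⟨k', rfl⟩ : ∃ k', k = k' + 1 := ⟨k - 1, by omega⟩
      obtain ⟨Cq, hCq0, hCq⟩ := poly_bound (PP (k'+1)).2 k' (by omega)
      refine ⟨Cq, hCq0, fun x hx => ?_⟩
      have hx1 : (1:ℝ) ≤ x := by linarith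
      have hx0 : (0:ℝ) ≤ x := by linarith
      calc |(PP (k'+1)).2.eval x| * x ≤ (Cq * x ^ k') * x := by
            exact mul_le_mul_of_nonneg_right (hCq x hx1) hx0
        _ = Cq * x ^ (k'+1) := by ring
  have hL2 : (0:ℝ) < Real.log 2 := Real.log_pos (by norm_num)
  refine ⟨Cp * 2^k / (Real.log 2)^k + Cq * 2^k / (Real.log 2)^(k+1), by positivity, ?_⟩
  intro x hx2
  have hx : (1:ℝ) < x := by linarith
  have hx1 : (1:ℝ) ≤ x := by linarith
  have hS := sqrt_pos' hx
  have hS2 := sqrt_sq' hx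
  have hA0 := arccosh_pos hx
  set S := Real.sqrt (x ^ 2 - 1) with hSdef
  set A := arccosh x with hAdef
  have hA2 : Real.log 2 ≤ A := by
    have h1 : Real.exp A = x + S := exp_arccosh hx
    have h2 : (2:ℝ) ≤ x + S := by linarith
    have := Real.log_le_log (by norm_num : (0:ℝ) < 2) h2
    rwa [← h1, Real.log_exp] at this
  have hxS : x ≤ 2 * S := by nlinarith [hS.le, hS2]
  have hSx : S ≤ x := by nlinarith [hS.le, hS2, hx.le]
  rw [D_eq_rep k hx]
  -- numerator bound
  have hnum : |(PP k).1.eval x * A + (PP k).2.eval x * S|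
      ≤ (Cp * 2^k / (Real.log 2)^k + Cq * 2^k / (Real.log 2)^(k+1)) * A^(k+1) * S^k := by
    have hP1 : |(PP k).1.eval x| ≤ Cp * (2*S)^k := by
      refine le_trans (hCp x hx1) ?_
      have : x ^ k ≤ (2*S)^k := pow_le_pow_left₀ (by linarith) hxS k
      exact mul_le_mul_of_nonneg_left this hCp0
    have hQ1 : |(PP k).2.eval x| * S ≤ Cq * (2*S)^k := by
      have h1 : |(PP k).2.eval x| * x ≤ Cq * x ^ k := hCq x hx2
      have h2 : |(PP k).2.eval x| * S ≤ |(PP k).2.eval x| * x :=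
        mul_le_mul_of_nonneg_left hSx (abs_nonneg _)
      refine le_trans h2 (le_trans h1 ?_)
      have : x ^ k ≤ (2*S)^k := pow_le_pow_left₀ (by linarith) hxS k
      exact mul_le_mul_of_nonneg_left this hCq0
    have hApow : (Real.log 2)^k ≤ A^k := pow_le_pow_left₀ hL2.le hA2 k
    have hApow1 : (Real.log 2)^(k+1) ≤ A^(k+1) := pow_le_pow_left₀ hL2.le hA2 (k+1)
    calc |(PP k).1.eval x * A + (PP k).2.eval x * S|
        ≤ |(PP k).1.eval x| * A + |(PP k).2.eval x| * S := by
          refine le_trans (abs_add_le _ _) ?_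
          rw [abs_mul, abs_mul, abs_of_nonneg hA0.le, abs_of_nonneg hS.le]
      _ ≤ Cp * (2*S)^k * A + Cq * (2*S)^k := by
          apply add_le_add
          · exact mul_le_mul_of_nonneg_right hP1 hA0.le
          · exact hQ1
      _ ≤ Cp * (2*S)^k * (A^(k+1) / (Real.log 2)^k)
            + Cq * (2*S)^k * (A^(k+1) / (Real.log 2)^(k+1)) := by
          apply add_le_add
          · apply mul_le_mul_of_nonneg_left _ (by positivity : (0:ℝ) ≤ Cp * (2*S)^k)
            rw [le_div_iff₀ (by positivity)]
            calc A * (Real.log 2)^k ≤ A * A^k :=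
                  mul_le_mul_of_nonneg_left hApow hA0.le
              _ = A^(k+1) := by ring
          · apply le_mul_of_one_le_right (by positivity : (0:ℝ) ≤ Cq * (2*S)^k)
            rw [le_div_iff₀ (by positivity), one_mul]
            exact hApow1
      _ = (Cp * 2^k / (Real.log 2)^k + Cq * 2^k / (Real.log 2)^(k+1)) * A^(k+1) * S^k := by
          rw [mul_pow]
          field_simp
  -- conclude
  have hrep : |rep k x| = |(PP k).1.eval x * A + (PP k).2.eval x * S| / S^(2*k+1) := by
    rw [rep, abs_div, abs_of_nonneg (by positivity : (0:ℝ) ≤ S^(2*k+1))]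
  rw [hrep, div_pow, div_le_iff₀ (by positivity : (0:ℝ) < S^(2*k+1))]
  calc |(PP k).1.eval x * A + (PP k).2.eval x * S|
      ≤ (Cp * 2^k / (Real.log 2)^k + Cq * 2^k / (Real.log 2)^(k+1)) * A^(k+1) * S^k := hnum
    _ = (Cp * 2^k / (Real.log 2)^k + Cq * 2^k / (Real.log 2)^(k+1))
          * (A^(k+1) / S^(k+1)) * S^(2*k+1) := by
        rw [show 2*k+1 = k + (k+1) from by omega, pow_add]
        field_simp
        ring



def AA : ℝ → ℝ := fun x => arccosh x ^ 2

lemma hasDerivAt_AA {x : ℝ} (hx : 1 < x) :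
    HasDerivAt AA (2 * arccosh x / Real.sqrt (x ^ 2 - 1)) x := by
  have h := (hasDerivAt_arccosh hx).pow 2
  refine h.congr_deriv ?_
  have hS := sqrt_pos' hx
  field_simp
  norm_num

lemma kap_AA_pos {x : ℝ} (hx : 1 < x) : 0 < kap (AA x) := by
  have hu := arccosh_pos hx
  have hs : 0 < Real.sinh (arccosh x) := Real.sinh_pos_iff.2 hu
  have h := kap_spec (arccosh x)
  have : kap (arccosh x ^ 2) = Real.sinh (arccosh x) / arccosh x := by
    field_simp at h ⊢
    linarith [h]
  rw [AA, this]
  positivity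

lemma kap_AA_eq {x : ℝ} (hx : 1 < x) :
    kap (AA x) = Real.sqrt (x ^ 2 - 1) / arccosh x := by
  have hu := arccosh_pos hx
  have h := kap_spec (arccosh x)
  rw [sinh_arccosh hx] at h
  rw [AA]
  field_simp
  linarith [h]

def VV : Set ℝ := {v | kap v ≠ 0}

lemma isOpen_VV : IsOpen VV :=
  isOpen_compl_singleton.preimage contDiff_kap.continuous

lemma zero_mem_VV : (0:ℝ) ∈ VV := by simp [VV, kap_zero]

lemma AA_mem_VV {x : ℝ} (hx : 1 < x) : AA x ∈ VV := ne_of_gt (kap_AA_pos hx)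

def GG : ℕ → ℝ → ℝ
  | 0 => fun v => 1 / (2 * kap v)
  | (k+1) => fun v => deriv (GG k) v * (2 / kap v)

lemma contDiffOn_GG (k : ℕ) : ContDiffOn ℝ (⊤ : ℕ∞) (GG k) VV := by
  induction k with
  | zero =>
    refine ContDiffOn.div contDiffOn_const
      ((contDiff_const.mul contDiff_kap).contDiffOn) ?_
    intro v hv
    exact mul_ne_zero two_ne_zero hv
  | succ k ih =>
    refine ContDiffOn.mul (ih.deriv_of_isOpen isOpen_VV (mod_cast le_top)) ?_
    exact ContDiffOn.div contDiffOn_const contDiff_kap.contDiffOn (fun v hv => hv)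

lemma D_eq_GG (k : ℕ) : ∀ {x : ℝ}, 1 < x → D (k+1) x = GG k (AA x) := by
  induction k with
  | zero =>
    intro x hx
    rw [D_one hx]
    show arccosh x / (2 * Real.sqrt (x ^ 2 - 1)) = 1 / (2 * kap (AA x))
    rw [kap_AA_eq hx]
    have hS := sqrt_pos' hx
    have hu := arccosh_pos hx
    field_simp
  | succ k ih =>
    intro x hx
    have hstep : D (k+2) x = deriv (D (k+1)) x := by
      rw [D, iteratedDeriv_succ]; rfl
    have heq : D (k+1) =ᶠ[𝓝 x] (fun y => GG k (AA y)) :=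
      Filter.eventuallyEq_of_mem (isOpen_Ioi.mem_nhds hx) (fun y hy => ih hy)
    have hGdiff : DifferentiableAt ℝ (GG k) (AA x) := by
      have h := ((contDiffOn_GG k).differentiableOn (by simp)).differentiableAt
        (isOpen_VV.mem_nhds (AA_mem_VV hx))
      exact h
    have hcomp : HasDerivAt (fun y => GG k (AA y))
        (deriv (GG k) (AA x) * (2 * arccosh x / Real.sqrt (x ^ 2 - 1))) x :=
      (hGdiff.hasDerivAt).comp x (hasDerivAt_AA hx)
    rw [hstep, heq.deriv_eq, hcomp.deriv]
    show _ = deriv (GG k) (AA x) * (2 / kap (AA x))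
    rw [kap_AA_eq hx]
    have hS := sqrt_pos' hx
    have hu := arccosh_pos hx
    field_simp
  
lemma D_near (k : ℕ) : ∃ δ : ℝ, 0 < δ ∧ ∃ K : ℝ, ∀ x : ℝ, 1 < x → x < 1 + δ →
    |D (k+1) x| ≤ K := by
  have hc : ContinuousAt (GG k) 0 :=
    ((contDiffOn_GG k).continuousOn).continuousAt (isOpen_VV.mem_nhds zero_mem_VV)
  obtain ⟨ε, hε, hball⟩ := Metric.continuousAt_iff.1 hc 1 one_pos
  have hAA : ContinuousAt AA 1 := by
    have := continuousAt_arccosh_one.pow 2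
    exact this
  have hAA1 : AA 1 = 0 := by simp [AA, arccosh_one]
  obtain ⟨δ, hδ, hball2⟩ := Metric.continuousAt_iff.1 hAA ε hε
  refine ⟨δ, hδ, |GG k 0| + 1, fun x hx hxδ => ?_⟩
  have h1 : dist x 1 < δ := by
    rw [Real.dist_eq, abs_of_pos (by linarith : (0:ℝ) < x - 1)]
    linarith
  have h2 := hball2 h1
  rw [hAA1] at h2
  have h3 := hball h2
  rw [D_eq_GG k hx]
  have := abs_sub_abs_le_abs_sub (GG k (AA x)) (GG k 0)
  have h4 : |GG k (AA x) - GG k 0| < 1 := by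
    rw [Real.dist_eq] at h3; exact h3
  linarith

lemma sinh_le_mul_cosh {u : ℝ} (hu : 0 ≤ u) : Real.sinh u ≤ u * Real.cosh u := by
  have hf : ∀ y : ℝ, HasDerivAt (fun z => z * Real.cosh z - Real.sinh z)
      (y * Real.sinh y) y := by
    intro y
    have h := ((hasDerivAt_id y).mul (Real.hasDerivAt_cosh y)).sub (Real.hasDerivAt_sinh y)
    refine h.congr_deriv ?_
    simp only [id_eq]
    ring
  have hmono : MonotoneOn (fun z => z * Real.cosh z - Real.sinh z) (Ici 0) := by
    apply monotoneOn_of_deriv_nonneg (convex_Ici 0)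
    · exact Continuous.continuousOn (by continuity)
    · intro y hy
      exact (hf y).differentiableAt.differentiableWithinAt
    · intro y hy
      rw [(hf y).deriv]
      rw [interior_Ici] at hy
      exact mul_nonneg (le_of_lt hy) (Real.sinh_nonneg_iff.2 (le_of_lt hy))
  have := hmono (self_mem_Ici) (mem_Ici.2 hu) hu
  simpa using this

lemma ratio_lower {x : ℝ} (hx : 1 < x) (hx2 : x ≤ 2) :
    (1:ℝ)/2 ≤ arccosh x / Real.sqrt (x ^ 2 - 1) := by
  have hS := sqrt_pos' hx
  have hu := arccosh_pos hx
  have h := sinh_le_mul_cosh hu.le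
  rw [sinh_arccosh hx, cosh_arccosh hx] at h
  rw [le_div_iff₀ hS]
  nlinarith



lemma Dbound (k : ℕ) : ∃ C, 0 ≤ C ∧ ∀ x : ℝ, 1 < x →
    |D (k+1) x| ≤ C * (arccosh x / Real.sqrt (x ^ 2 - 1)) ^ (k+1) := by
  obtain ⟨δ₀, hδ₀, K, hK⟩ := D_near k
  obtain ⟨Cf, hCf0, hCf⟩ := D_large k
  set δ := min δ₀ 1 with hδdef
  have hδ : 0 < δ := lt_min hδ₀ one_pos
  have hδ1 : δ ≤ 1 := min_le_right _ _
  have hδ0' : δ ≤ δ₀ := min_le_left _ _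
  -- K is nonnegative
  have hK0 : 0 ≤ K := by
    have hw : 1 < 1 + δ/2 := by linarith
    have := hK (1 + δ/2) hw (by linarith)
    exact le_trans (abs_nonneg _) this
  -- middle region bound
  have hmid : ∃ Km, 0 ≤ Km ∧ ∀ x ∈ Icc (1+δ) 2,
      |D (k+1) x| ≤ Km * (arccosh x / Real.sqrt (x ^ 2 - 1)) ^ (k+1) := by
    have hsub : Icc (1+δ) 2 ⊆ Ioi 1 := fun y hy => by
      simp only [mem_Ioi]; have := hy.1; linarith
    have hcont : ContinuousOn
        (fun x => |D (k+1) x| * (Real.sqrt (x ^ 2 - 1) / arccosh x) ^ (k+1))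
        (Icc (1+δ) 2) := by
      intro y hy
      have hy1 : 1 < y := hsub hy
      have hD : ContinuousAt (D (k+1)) y := (D_hasDeriv (Nat.le_add_left 1 k) hy1).continuousAt
      have hA : ContinuousAt arccosh y := (hasDerivAt_arccosh hy1).continuousAt
      have hs : ContinuousAt (fun x : ℝ => Real.sqrt (x ^ 2 - 1)) y :=
        Real.continuous_sqrt.continuousAt.comp (by fun_prop)
      have hAne : arccosh y ≠ 0 := ne_of_gt (arccosh_pos hy1)
      exact ContinuousAt.continuousWithinAt
        ((hD.abs.mul (((hs.div hA hAne)).pow (k+1))))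
    obtain ⟨Km, hKm⟩ := isCompact_Icc.exists_bound_of_continuousOn hcont
    refine ⟨Km, ?_, fun x hx => ?_⟩
    · have hne : (1+δ) ∈ Icc (1+δ) 2 := ⟨le_refl _, by linarith⟩
      exact le_trans (norm_nonneg _) (hKm _ hne)
    · have hx1 : 1 < x := hsub hx
      have hS := sqrt_pos' hx1
      have hA := arccosh_pos hx1
      have h1 : |D (k+1) x| * (Real.sqrt (x ^ 2 - 1) / arccosh x) ^ (k+1) ≤ Km :=
        le_trans (le_abs_self _) (hKm x hx)
      have h2 := mul_le_mul_of_nonneg_right h1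
        (by positivity : (0:ℝ) ≤ (arccosh x / Real.sqrt (x ^ 2 - 1)) ^ (k+1))
      calc |D (k+1) x|
          = |D (k+1) x| * ((Real.sqrt (x ^ 2 - 1) / arccosh x)
              * (arccosh x / Real.sqrt (x ^ 2 - 1))) ^ (k+1) := by
            rw [div_mul_div_comm]
            rw [show Real.sqrt (x ^ 2 - 1) * arccosh x / (arccosh x * Real.sqrt (x ^ 2 - 1))
                = 1 from by field_simp]
            simp
        _ = |D (k+1) x| * (Real.sqrt (x ^ 2 - 1) / arccosh x) ^ (k+1)
              * (arccosh x / Real.sqrt (x ^ 2 - 1)) ^ (k+1) := by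
            rw [mul_pow]; ring
        _ ≤ Km * (arccosh x / Real.sqrt (x ^ 2 - 1)) ^ (k+1) := h2
  obtain ⟨Km, hKm0, hKm⟩ := hmid
  refine ⟨max (K * 2^(k+1)) (max Km Cf), le_trans hCf0 (le_max_of_le_right (le_max_right _ _)), ?_⟩
  intro x hx
  have hS := sqrt_pos' hx
  have hA := arccosh_pos hx
  have hpow : (0:ℝ) ≤ (arccosh x / Real.sqrt (x ^ 2 - 1)) ^ (k+1) := by positivity
  rcases lt_or_ge x (1 + δ) with hcase | hcase
  · -- near region
    have hx2 : x ≤ 2 := by linarith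
    have hr := ratio_lower hx hx2
    have h1 : ((1:ℝ)/2) ^ (k+1) ≤ (arccosh x / Real.sqrt (x ^ 2 - 1)) ^ (k+1) :=
      pow_le_pow_left₀ (by norm_num) hr (k+1)
    have h2 : |D (k+1) x| ≤ K := hK x hx (by linarith)
    calc |D (k+1) x| ≤ K := h2
      _ = (K * 2^(k+1)) * ((1:ℝ)/2) ^ (k+1) := by
          rw [one_div, inv_pow, mul_assoc, mul_inv_cancel₀ (by positivity : (2:ℝ)^(k+1) ≠ 0),
            mul_one]
      _ ≤ (K * 2^(k+1)) * (arccosh x / Real.sqrt (x ^ 2 - 1)) ^ (k+1) :=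
          mul_le_mul_of_nonneg_left h1 (by positivity)
      _ ≤ max (K * 2^(k+1)) (max Km Cf) * (arccosh x / Real.sqrt (x ^ 2 - 1)) ^ (k+1) :=
          mul_le_mul_of_nonneg_right (le_max_left _ _) hpow
  · rcases le_or_gt x 2 with hcase2 | hcase2
    · -- middle
      refine le_trans (hKm x ⟨hcase, hcase2⟩) ?_
      exact mul_le_mul_of_nonneg_right (le_max_of_le_right (le_max_left _ _)) hpow
    · -- far
      refine le_trans (hCf x hcase2.le) ?_
      exact mul_le_mul_of_nonneg_right (le_max_of_le_right (le_max_right _ _)) hpow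



def mono (l : List ℕ) (x : ℝ) : ℝ := (l.map (fun m => D m x)).prod

def incr : List ℕ → List (List ℕ)
  | [] => []
  | m :: l => ((m+1) :: l) :: (incr l).map (fun l' => m :: l')

lemma incr_sum : ∀ {l l' : List ℕ}, l' ∈ incr l → l'.sum = l.sum + 1 := by
  intro l
  induction l with
  | nil => intro l' h; simp [incr] at h
  | cons m l ih =>
    intro l' h
    rw [incr, List.mem_cons] at h
    rcases h with rfl | h
    · simp [List.sum_cons]; omega
    · obtain ⟨l'', hl'', rfl⟩ := List.mem_map.1 h
      simp [List.sum_cons, ih hl'']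
      omega

lemma incr_ge : ∀ {l l' : List ℕ}, l' ∈ incr l → (∀ i ∈ l, 1 ≤ i) → ∀ i ∈ l', 1 ≤ i := by
  intro l
  induction l with
  | nil => intro l' h; simp [incr] at h
  | cons m l ih =>
    intro l' h hl
    rw [incr, List.mem_cons] at h
    rcases h with rfl | h
    · intro i hi
      rcases List.mem_cons.1 hi with rfl | hi
      · omega
      · exact hl i (List.mem_cons_of_mem _ hi)
    · obtain ⟨l'', hl'', rfl⟩ := List.mem_map.1 h
      intro i hi
      rcases List.mem_cons.1 hi with rfl | hi
      · exact hl i (List.mem_cons_self)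
      · exact ih hl'' (fun j hj => hl j (List.mem_cons_of_mem _ hj)) i hi

lemma list_sum_map_mul_left {α : Type*} (a : ℝ) (f : α → ℝ) (L : List α) :
    (L.map (fun b => a * f b)).sum = a * (L.map f).sum := by
  induction L with
  | nil => simp
  | cons b L ih => simp [ih, mul_add]

lemma hasDerivAt_mono {l : List ℕ} (hl : ∀ i ∈ l, 1 ≤ i) {x : ℝ} (hx : 1 < x) :
    HasDerivAt (fun y => mono l y) (((incr l).map (fun l' => mono l' x)).sum) x := by
  induction l with
  | nil =>
    simp only [mono, List.map_nil, List.prod_nil, incr, List.sum_nil]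
    exact hasDerivAt_const x 1
  | cons m l ih =>
    have hD := D_hasDeriv (hl m (List.mem_cons_self)) hx
    have ih' := ih (fun i hi => hl i (List.mem_cons_of_mem _ hi))
    have h := hD.mul ih'
    have hfun : (fun y => D m y * mono l y) = fun y => mono (m :: l) y := by
      funext y; simp [mono]
    change HasDerivAt (fun y => D m y * mono l y) _ x at h
    rw [hfun] at h
    convert h using 1
    simp only [incr, List.map_cons, List.sum_cons, List.map_map]
    have h1 : mono ((m+1) :: l) x = D (m+1) x * mono l x := by simp [mono]
    have h2 : ((incr l).map ((fun l' => mono l' x) ∘ fun l' => m :: l')).sum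
        = D m x * ((incr l).map (fun l' => mono l' x)).sum := by
      rw [show ((fun l' => mono l' x) ∘ fun l' => m :: l') = fun l' => D m x * mono l' x
          from by funext l'; simp [mono]]
      exact list_sum_map_mul_left _ _ _
    rw [h1, h2]

lemma hasDerivAt_list_sum {α : Type*} (L : List α) (f : α → ℝ → ℝ) (f' : α → ℝ) {x : ℝ}
    (h : ∀ a ∈ L, HasDerivAt (fun y => f a y) (f' a) x) :
    HasDerivAt (fun y => (L.map (fun a => f a y)).sum) ((L.map f').sum) x := by
  induction L with
  | nil => simpa using hasDerivAt_const x 0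
  | cons a L ih =>
    simp only [List.map_cons, List.sum_cons]
    exact (h a (List.mem_cons_self)).add (ih (fun b hb => h b (List.mem_cons_of_mem _ hb)))

lemma list_sum_add {α : Type*} (L : List α) (f g : α → ℝ) :
    (L.map f).sum + (L.map g).sum = (L.map (fun a => f a + g a)).sum := by
  induction L with
  | nil => simp
  | cons a L ih => simp [List.sum_cons, ← ih]; ring

lemma list_sum_bind {α β : Type*} (L : List α) (f : α → List β) (g : β → ℝ) :
    (((L.flatMap f)).map g).sum = (L.map (fun a => ((f a).map g).sum)).sum := by
  induction L with
  | nil => simp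
  | cons a L ih => simp [List.flatMap_cons, ih]

theorem repQ (n : ℕ) : ∃ L : List (ℝ × ℕ × List ℕ),
    (∀ p ∈ L, p.2.1 ≤ n ∧ (p.2.2).sum = n + 1 ∧ ∀ m ∈ p.2.2, 1 ≤ m) ∧
    ∀ t : ℝ, 0 < t → ∀ x : ℝ, 1 < x →
      iteratedDeriv n (fun y => Q2 t y) x
        = Real.exp (BB x / t) * (L.map (fun p => p.1 / t ^ p.2.1 * mono p.2.2 x)).sum := by
  induction n with
  | zero =>
    refine ⟨[(2, 0, [1])], ?_, ?_⟩
    · intro p hp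
      simp at hp
      subst hp
      norm_num
    · intro t ht x hx
      rw [iteratedDeriv_zero]
      have hS := sqrt_pos' hx
      have h1 : mono [1] x = D 1 x := by simp [mono]
      simp only [List.map_cons, List.map_nil, List.sum_cons, List.sum_nil, h1, D_one hx]
      rw [Q2, BB]
      rw [show arccosh x ^ 2 / 4 / t = arccosh x ^ 2 / (4 * t) from by ring]
      field_simp
      ring
  | succ n ih =>
    obtain ⟨L, hL, hrep⟩ := ih
    refine ⟨L.flatMap (fun p => (p.1, p.2.1 + 1, 1 :: p.2.2)
        :: (incr p.2.2).map (fun l' => (p.1, p.2.1, l'))), ?_, ?_⟩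
    · intro p hp
      obtain ⟨q, hq, hpq⟩ := List.mem_flatMap.1 hp
      obtain ⟨c, j, l⟩ := q
      obtain ⟨hj, hsum, hge⟩ := hL _ hq
      simp only at hj hsum hge
      rcases List.mem_cons.1 hpq with rfl | hmem
      · refine ⟨by simp; omega, by simp [List.sum_cons, hsum]; omega, ?_⟩
        intro m hm
        rcases List.mem_cons.1 hm with rfl | hm
        · omega
        · exact hge m hm
      · obtain ⟨l', hl', rfl⟩ := List.mem_map.1 hmem
        refine ⟨by simp; omega, ?_, incr_ge hl' hge⟩
        simp only
        rw [incr_sum hl', hsum]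
    · intro t ht x hx
      have htne : t ≠ 0 := ne_of_gt ht
      have hstep : iteratedDeriv (n+1) (fun y => Q2 t y) x
          = deriv (iteratedDeriv n (fun y => Q2 t y)) x := by
        rw [iteratedDeriv_succ]
      have heq : iteratedDeriv n (fun y => Q2 t y) =ᶠ[𝓝 x]
          (fun y => Real.exp (BB y / t) * (L.map (fun p => p.1 / t ^ p.2.1 * mono p.2.2 y)).sum) :=
        Filter.eventuallyEq_of_mem (isOpen_Ioi.mem_nhds hx) (fun y hy => hrep t ht y hy)
      -- derivative of the representation
      have hexp : HasDerivAt (fun y => Real.exp (BB y / t))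
          (Real.exp (BB x / t) * (D 1 x / t)) x := by
        have h := ((hasDerivAt_BB hx).div_const t).exp
        rw [← D_one hx] at h
        exact h
      have hsum : HasDerivAt
          (fun y => (L.map (fun p => p.1 / t ^ p.2.1 * mono p.2.2 y)).sum)
          ((L.map (fun p => p.1 / t ^ p.2.1 *
              ((incr p.2.2).map (fun l' => mono l' x)).sum)).sum) x := by
        apply hasDerivAt_list_sum
        intro p hp
        exact ((hasDerivAt_mono (hL p hp).2.2 hx).const_mul (p.1 / t ^ p.2.1))
      have hprod := hexp.mul hsum
      change HasDerivAt (fun y => Real.exp (BB y / t) * (L.map (fun p => p.1 / t ^ p.2.1 * mono p.2.2 y)).sum) _ x at hprod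
      rw [hstep, heq.deriv_eq, hprod.deriv]
      -- now algebra
      rw [list_sum_bind]
      have key : (D 1 x / t) * (L.map (fun p => p.1 / t ^ p.2.1 * mono p.2.2 x)).sum
          + (L.map (fun p => p.1 / t ^ p.2.1 *
              ((incr p.2.2).map (fun l' => mono l' x)).sum)).sum
          = (L.map (fun p => ((((p.1, p.2.1 + 1, 1 :: p.2.2)
              :: (incr p.2.2).map (fun l' => (p.1, p.2.1, l'))) : List (ℝ × ℕ × List ℕ)).map
                (fun p => p.1 / t ^ p.2.1 * mono p.2.2 x)).sum)).sum := by
        rw [← list_sum_map_mul_left (D 1 x / t) _ L, list_sum_add]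
        congr 1
        apply List.map_congr_left
        intro p _
        simp only [List.map_cons, List.sum_cons, List.map_map]
        have e1 : mono (1 :: p.2.2) x = D 1 x * mono p.2.2 x := by simp [mono]
        have e2 : ((incr p.2.2).map
            ((fun q : ℝ × ℕ × List ℕ => q.1 / t ^ q.2.1 * mono q.2.2 x) ∘
              (fun l' => (p.1, p.2.1, l')))).sum
            = p.1 / t ^ p.2.1 * ((incr p.2.2).map (fun l' => mono l' x)).sum := by
          rw [show ((fun q : ℝ × ℕ × List ℕ => q.1 / t ^ q.2.1 * mono q.2.2 x) ∘
              (fun l' => (p.1, p.2.1, l'))) = fun l' => p.1 / t ^ p.2.1 * mono l' x from rfl]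
          exact list_sum_map_mul_left _ _ _
        rw [e2, e1]
        have htp : t ^ p.2.1 ≠ 0 := pow_ne_zero _ htne
        field_simp
        ring
      rw [← key]
      ring
  


def Cm (m : ℕ) : ℝ := (Dbound (m - 1)).choose

lemma Cm_nonneg (m : ℕ) : 0 ≤ Cm m := (Dbound (m - 1)).choose_spec.1

lemma Cm_spec {m : ℕ} (hm : 1 ≤ m) {x : ℝ} (hx : 1 < x) :
    |D m x| ≤ Cm m * (arccosh x / Real.sqrt (x ^ 2 - 1)) ^ m := by
  obtain ⟨k, rfl⟩ : ∃ k, m = k + 1 := ⟨m - 1, (Nat.succ_pred_eq_of_pos hm).symm⟩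
  simpa [Cm] using (Dbound k).choose_spec.2 x hx

lemma list_prod_nonneg {l : List ℕ} : 0 ≤ (l.map Cm).prod := by
  induction l with
  | nil => simp
  | cons m l ih => simpa using mul_nonneg (Cm_nonneg m) ih

lemma mono_bound {l : List ℕ} (hl : ∀ i ∈ l, 1 ≤ i) {x : ℝ} (hx : 1 < x) :
    |mono l x| ≤ (l.map Cm).prod * (arccosh x / Real.sqrt (x ^ 2 - 1)) ^ l.sum := by
  have hS := sqrt_pos' hx
  have hA := arccosh_pos hx
  induction l with
  | nil => simp [mono]
  | cons m l ih =>
    have ih' := ih (fun i hi => hl i (List.mem_cons_of_mem _ hi))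
    have hm := Cm_spec (hl m (List.mem_cons_self)) hx
    have h1 : |mono (m :: l) x| = |D m x| * |mono l x| := by
      simp [mono, abs_mul]
    rw [h1, List.map_cons, List.prod_cons, List.sum_cons, pow_add]
    calc |D m x| * |mono l x|
        ≤ (Cm m * (arccosh x / Real.sqrt (x ^ 2 - 1)) ^ m)
          * ((l.map Cm).prod * (arccosh x / Real.sqrt (x ^ 2 - 1)) ^ l.sum) :=
          mul_le_mul hm ih' (abs_nonneg _) (mul_nonneg (Cm_nonneg m) (by positivity))
      _ = Cm m * (l.map Cm).prod
            * ((arccosh x / Real.sqrt (x ^ 2 - 1)) ^ m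
              * (arccosh x / Real.sqrt (x ^ 2 - 1)) ^ l.sum) := by ring

lemma list_abs_sum_le {α : Type*} (L : List α) (f : α → ℝ) :
    |(L.map f).sum| ≤ (L.map (fun a => |f a|)).sum := by
  induction L with
  | nil => simp
  | cons a L ih =>
    simp only [List.map_cons, List.sum_cons]
    exact le_trans (abs_add_le _ _) (by linarith)

lemma list_sum_le {α : Type*} (L : List α) (f g : α → ℝ) (h : ∀ a ∈ L, f a ≤ g a) :
    (L.map f).sum ≤ (L.map g).sum := by
  induction L with
  | nil => simp
  | cons a L ih =>
    simp only [List.map_cons, List.sum_cons]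
    exact add_le_add (h a (List.mem_cons_self))
      (ih (fun b hb => h b (List.mem_cons_of_mem _ hb)))

lemma list_sum_map_mul_right {α : Type*} (K : ℝ) (f : α → ℝ) (L : List α) :
    (L.map (fun b => f b * K)).sum = (L.map f).sum * K := by
  induction L with
  | nil => simp
  | cons b L ih => simp [ih, add_mul]


end S11

open S11 in
/-- Lemma `l.Q2`: for each `n ≥ 0` there is `Cₙ < ∞` with
`|∂ⁿ/∂xⁿ Q₂(t,x)| ≤ (Cₙ/tⁿ)·e^{arccosh²(x)/(4t)}·(arccosh x)^{n+1}/(x²−1)^{(n+1)/2}`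
for all `x ∈ (1,∞)` and `t ∈ (0,1)`. -/
theorem statement11 (n : ℕ) :
    ∃ C : ℝ, ∀ x ∈ Set.Ioi (1 : ℝ), ∀ t ∈ Set.Ioo (0 : ℝ) 1,
      |iteratedDeriv n (fun x : ℝ => Q2 t x) x| ≤
        (C / t ^ n) * Real.exp ((arccosh x) ^ 2 / (4 * t)) *
          ((arccosh x) ^ (n + 1) / (x ^ 2 - 1) ^ (((n : ℝ) + 1) / 2)) := by

  obtain ⟨L, hL, hrep⟩ := repQ n
  refine ⟨(L.map (fun p => |p.1| * ((p.2.2.map Cm).prod))).sum, ?_⟩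
  intro x hx t ht
  obtain ⟨ht0, ht1⟩ := ht
  rw [mem_Ioi] at hx
  have hS := sqrt_pos' hx
  have hA := arccosh_pos hx
  have hE := sq_sub_pos hx
  have htn : (0:ℝ) < t ^ n := by positivity
  set A := arccosh x with hAdef
  set S := Real.sqrt (x ^ 2 - 1) with hSdef
  have hexp : (0:ℝ) < Real.exp (BB x / t) := Real.exp_pos _
  -- rewrite using the representation
  rw [hrep t ht0 x hx, abs_mul, abs_of_pos hexp]
  -- bound the sum
  have hbound : |(L.map (fun p => p.1 / t ^ p.2.1 * mono p.2.2 x)).sum|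
      ≤ (L.map (fun p => |p.1| * ((p.2.2.map Cm).prod))).sum * ((A / S) ^ (n+1) / t ^ n) := by
    refine le_trans (list_abs_sum_le _ _) ?_
    rw [← list_sum_map_mul_right]
    apply list_sum_le
    intro p hp
    obtain ⟨hj, hsum, hge⟩ := hL p hp
    have h1 : |p.1 / t ^ p.2.1 * mono p.2.2 x| = |p.1| / t ^ p.2.1 * |mono p.2.2 x| := by
      rw [abs_mul, abs_div, abs_of_pos (by positivity : (0:ℝ) < t ^ p.2.1)]
    rw [h1]
    have h2 : |mono p.2.2 x| ≤ (p.2.2.map Cm).prod * (A / S) ^ (n+1) := by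
      have := mono_bound hge hx
      rwa [hsum] at this
    have h3 : |p.1| / t ^ p.2.1 ≤ |p.1| / t ^ n := by
      apply div_le_div_of_nonneg_left (abs_nonneg _) htn
      exact pow_le_pow_of_le_one ht0.le ht1.le hj
    calc |p.1| / t ^ p.2.1 * |mono p.2.2 x|
        ≤ |p.1| / t ^ n * ((p.2.2.map Cm).prod * (A / S) ^ (n+1)) :=
          mul_le_mul h3 h2 (abs_nonneg _) (by positivity)
      _ = |p.1| * (p.2.2.map Cm).prod * ((A / S) ^ (n+1) / t ^ n) := by
          ring
  refine le_trans (mul_le_mul_of_nonneg_left hbound hexp.le) (le_of_eq ?_)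
  -- now an equality of the two closed forms
  have e1 : Real.exp (BB x / t) = Real.exp (A ^ 2 / (4 * t)) := by
    rw [BB]
    congr 1
    ring
  have e2 : S ^ (n+1) = (x ^ 2 - 1) ^ (((n : ℝ) + 1) / 2) := by
    rw [hSdef, Real.sqrt_eq_rpow, ← Real.rpow_natCast ((x^2-1) ^ ((1:ℝ)/2)) (n+1),
      ← Real.rpow_mul hE.le]
    congr 1
    push_cast
    ring
  rw [e1, div_pow, e2]
  field_simp
end
end

section
/- Fix a real number K ≥ 1 and an integer n ≥ 1. Then for all x ∈ (1,∞): |dⁿ/dxⁿ cos(K·arccosh x)| ≤ (1/(2n−1)!!)·∏_{m=0}^{n−1}(K²+m²), and moreover lim_{x↓1} dⁿ/dxⁿ cos(K·arccosh x) = ((−1)ⁿ/(2n−1)!!)·∏_{m=0}^{n−1}(K²+m²). -/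
open Real Filter Set Topology

noncomputable section

/-!
Put `x = cosh t` and `u n t = f⁽ⁿ⁾ (cosh t)` for `f x = cos (K * arccosh x)`. Then
`u 0 t = cos (K t)`, `∂ₜ u n = sinh · u (n + 1)`, and differentiating
`(x² - 1) f'' + x f' + K² f = 0` gives
`sinh² · u (n + 2) + (2n + 1) cosh · u (n + 1) + (K² + n²) u n = 0`.

Along this recurrence the energy `(sinh · u (n + 1))² + (K² + n²) (u n)²` decreases in `t`, so
`|u n|` is bounded by its limit at `t = 0⁺`. These limits `c n` satisfy
`(2n + 1) c (n + 1) = -(K² + n²) c n`: with `W = sinh ^ (2n + 1) · u (n + 1)` one has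
`W' = -(K² + n²) sinh ^ (2n) · u n`, so L'Hôpital applies to `u (n + 1) = W / sinh ^ (2n + 1)`
once `W → 0`. And `W → 0` because otherwise `∂ₜ u n = W / sinh ^ (2n)` would not be integrable
at `0`, although `u n` converges there.
-/

lemma antitoneOn_of_hasDerivAt_nonpos {D : Set ℝ} (hD : Convex ℝ D) {f f' : ℝ → ℝ}
    (hf : ∀ x ∈ D, HasDerivAt f (f' x) x) (hf' : ∀ x ∈ D, f' x ≤ 0) : AntitoneOn f D :=
  antitoneOn_of_hasDerivWithinAt_nonpos hD (fun x hx => (hf x hx).continuousAt.continuousWithinAt)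
    (fun x hx => (hf x (interior_subset hx)).hasDerivWithinAt)
    fun x hx => hf' x (interior_subset hx)

lemma eq_of_hasDerivAt_of_eqOn {f g : ℝ → ℝ} {s : Set ℝ} {t a b : ℝ} (hs : IsOpen s)
    (hfg : EqOn f g s) (ht : t ∈ s) (hf : HasDerivAt f a t) (hg : HasDerivAt g b t) : a = b :=
  hf.unique (hg.congr_of_eventuallyEq (hfg.eventuallyEq_of_mem (hs.mem_nhds ht)))

lemma tendsto_atBot_of_hasDerivAt_le {a : ℝ} {u u' h h' : ℝ → ℝ}
    (hu : ∀ᶠ t in 𝓝[>] a, HasDerivAt u (u' t) t) (hh : ∀ᶠ t in 𝓝[>] a, HasDerivAt h (h' t) t)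
    (hle : ∀ᶠ t in 𝓝[>] a, h' t ≤ u' t) (hbot : Tendsto h (𝓝[>] a) atBot) :
    Tendsto u (𝓝[>] a) atBot := by
  obtain ⟨b, hab, hsub⟩ := mem_nhdsGT_iff_exists_Ioo_subset.1 (hu.and (hh.and hle))
  have hanti : AntitoneOn (fun t => h t - u t) (Ioo a b) :=
    antitoneOn_of_hasDerivAt_nonpos (convex_Ioo a b) (fun t ht => (hsub ht).2.1.sub (hsub ht).1)
      fun t ht => sub_nonpos.2 (hsub ht).2.2
  obtain ⟨s, hs⟩ := nonempty_Ioo.2 (mem_Ioi.1 hab)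
  refine tendsto_atBot_mono' _ ?_ (tendsto_atBot_add_const_right _ (u s - h s) hbot)
  filter_upwards [Ioo_mem_nhdsGT hs.1] with t ht
  have := hanti ⟨ht.1, ht.2.trans hs.2⟩ hs ht.2.le
  dsimp only at this
  linarith

lemma tendsto_cosh_div_sinh_nhdsGT_zero : Tendsto (fun t => cosh t / sinh t) (𝓝[>] 0) atTop := by
  have hsinh : Tendsto sinh (𝓝[>] 0) (𝓝[>] 0) :=
    tendsto_nhdsWithin_iff.2 ⟨(continuous_sinh.tendsto' 0 0 sinh_zero).mono_left nhdsWithin_le_nhds,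
      eventually_nhdsWithin_of_forall fun t ht => sinh_pos_iff.2 ht⟩
  have hcosh : Tendsto cosh (𝓝[>] 0) (𝓝 1) :=
    (continuous_cosh.tendsto' 0 1 cosh_zero).mono_left nhdsWithin_le_nhds
  simpa only [div_eq_mul_inv, Function.comp_def] using
    hcosh.pos_mul_atTop one_pos (tendsto_inv_nhdsGT_zero.comp hsinh)

-- `W / sinh ^ (2n)` with `W ≥ ε` dominates `ε / sinh ^ 2 = -(ε coth)'`, not integrable at `0`.
lemma not_eventually_le_of_hasDerivAt_div_sinh_pow {n : ℕ} (hn : n ≠ 0) {u W : ℝ → ℝ} {L ε : ℝ}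
    (hε : 0 < ε) (hu : ∀ t, 0 < t → HasDerivAt u (W t / sinh t ^ (2 * n)) t)
    (huL : Tendsto u (𝓝[>] 0) (𝓝 L)) : ¬ ∀ᶠ t in 𝓝[>] 0, ε ≤ W t := by
  intro hW
  have hsinh_le : ∀ᶠ t in 𝓝[>] (0 : ℝ), sinh t ≤ 1 :=
    ((continuous_sinh.tendsto' 0 0 sinh_zero).eventually
      (eventually_le_nhds zero_lt_one)).filter_mono nhdsWithin_le_nhds
  refine not_tendsto_nhds_of_tendsto_atBot ?_ L huL
  refine tendsto_atBot_of_hasDerivAt_le (h := fun t => -(ε * (cosh t / sinh t)))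
    (h' := fun t => ε / sinh t ^ 2) (eventually_nhdsWithin_of_forall hu) ?_ ?_ ?_
  · refine eventually_nhdsWithin_of_forall fun t ht => ?_
    have hs := (sinh_pos_iff.2 ht).ne'
    refine ((((hasDerivAt_cosh t).div (hasDerivAt_sinh t) hs).const_mul ε).neg).congr_deriv ?_
    have hcs : sinh t * sinh t - cosh t * cosh t = -1 := by linear_combination -cosh_sq t
    rw [hcs]
    ring
  · filter_upwards [hW, hsinh_le, self_mem_nhdsWithin] with t hWt hs1 ht
    have hs := sinh_pos_iff.2 ht
    calc ε / sinh t ^ 2 ≤ ε / sinh t ^ (2 * n) := div_le_div_of_nonneg_left hε.le (by positivity)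
          (pow_le_pow_of_le_one hs.le hs1 (by omega))
      _ ≤ W t / sinh t ^ (2 * n) := div_le_div_of_nonneg_right hWt (by positivity)
  · exact tendsto_neg_atTop_atBot.comp (tendsto_cosh_div_sinh_nhdsGT_zero.const_mul_atTop hε)

-- For `L > 0`, `W` is antitone near `0` and can stay neither above `ε` nor below `-ε`.
lemma tendsto_zero_of_hasDerivAt_div_sinh_pow {n : ℕ} (hn : n ≠ 0) {u W : ℝ → ℝ} {A L : ℝ}
    (hA : 0 ≤ A) (hL : L ≠ 0) (huL : Tendsto u (𝓝[>] 0) (𝓝 L))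
    (hu : ∀ t, 0 < t → HasDerivAt u (W t / sinh t ^ (2 * n)) t)
    (hW : ∀ t, 0 < t → HasDerivAt W (-(A * sinh t ^ (2 * n) * u t)) t) :
    Tendsto W (𝓝[>] 0) (𝓝 0) := by
  wlog hpos : 0 < L generalizing u W L
  · have := this (u := -u) (W := -W) (neg_ne_zero.2 hL) huL.neg
      (fun t ht => by simpa only [Pi.neg_apply, neg_div] using (hu t ht).neg)
      (fun t ht => by simpa only [Pi.neg_apply, mul_neg, neg_neg] using (hW t ht).neg)
      (neg_pos.2 (lt_of_le_of_ne (not_lt.1 hpos) hL))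
    simpa using this.neg
  obtain ⟨δ, hδ, hupos⟩ :=
    mem_nhdsGT_iff_exists_Ioo_subset.1 (huL.eventually (eventually_gt_nhds hpos))
  have hanti : AntitoneOn W (Ioo 0 δ) :=
    antitoneOn_of_hasDerivAt_nonpos (convex_Ioo 0 δ) (fun t ht => hW t ht.1) fun t ht =>
      neg_nonpos.2 <|
        mul_nonneg (mul_nonneg hA (pow_nonneg (sinh_pos_iff.2 ht.1).le _)) (hupos ht).le
  have hge : ∀ t₁ ∈ Ioo 0 δ, ∀ᶠ t in 𝓝[>] 0, W t₁ ≤ W t := fun t₁ ht₁ =>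
    eventually_of_mem (Ioo_mem_nhdsGT ht₁.1) fun t ht => hanti ⟨ht.1, ht.2.trans ht₁.2⟩ ht₁ ht.2.le
  rw [tendsto_order]
  constructor
  · intro a ha
    obtain ⟨t₁, ht₁, hat₁⟩ : ∃ t ∈ Ioo 0 δ, a < W t := by
      by_contra! H
      refine not_eventually_le_of_hasDerivAt_div_sinh_pow hn (neg_pos.2 ha) (u := -u) (W := -W)
        (fun t ht => by simpa only [Pi.neg_apply, neg_div] using (hu t ht).neg) huL.neg ?_
      filter_upwards [Ioo_mem_nhdsGT hδ] with t ht
      simpa using H t ht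
    exact (hge t₁ ht₁).mono fun t ht => hat₁.trans_le ht
  · intro b hb
    filter_upwards [Ioo_mem_nhdsGT hδ] with t₁ ht₁
    by_contra! hle
    exact not_eventually_le_of_hasDerivAt_div_sinh_pow hn hb hu huL
      ((hge t₁ ht₁).mono fun t ht => hle.trans ht)

lemma hasDerivAt_cos_mul (K t : ℝ) : HasDerivAt (fun s => cos (K * s)) (-(K * sin (K * t))) t :=
  ((hasDerivAt_id t).const_mul K).cos.congr_deriv (by simp; ring)

def limitAtOne (K : ℝ) (n : ℕ) : ℝ :=
  (-1) ^ n / (Nat.doubleFactorial (2 * n - 1) : ℝ) * ∏ m ∈ Finset.range n, (K ^ 2 + (m : ℝ) ^ 2)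

lemma limitAtOne_zero (K : ℝ) : limitAtOne K 0 = 1 := by
  simp [limitAtOne]

lemma limitAtOne_succ (K : ℝ) (n : ℕ) :
    limitAtOne K (n + 1) = -(K ^ 2 + n ^ 2) / (2 * n + 1) * limitAtOne K n := by
  have h : 2 * (n + 1) - 1 = 2 * n + 1 := by omega
  rw [limitAtOne, limitAtOne, h, Nat.doubleFactorial_add_one, Finset.prod_range_succ]
  push_cast
  field_simp
  ring

lemma limitAtOne_ne_zero {K : ℝ} (hK : K ≠ 0) (n : ℕ) : limitAtOne K n ≠ 0 :=
  mul_ne_zero (div_ne_zero (pow_ne_zero _ (by norm_num)) (by positivity))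
    (Finset.prod_ne_zero_iff.2 fun m _ => by positivity)

lemma abs_limitAtOne (K : ℝ) (n : ℕ) :
    |limitAtOne K n| =
      1 / (Nat.doubleFactorial (2 * n - 1) : ℝ) * ∏ m ∈ Finset.range n, (K ^ 2 + (m : ℝ) ^ 2) := by
  rw [limitAtOne, abs_mul, abs_div, abs_pow, abs_neg, abs_one, one_pow, Nat.abs_cast,
    abs_of_nonneg (Finset.prod_nonneg fun m _ => by positivity)]

-- `u n t` plays the role of `f⁽ⁿ⁾ (cosh t)` for `f x = cos (K * arcosh x)`.
structure CoshDerivs (K : ℝ) (u : ℕ → ℝ → ℝ) : Prop where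
  zero : ∀ t, 0 < t → u 0 t = cos (K * t)
  hasDerivAt : ∀ n t, 0 < t → HasDerivAt (u n) (sinh t * u (n + 1) t) t

namespace CoshDerivs

variable {K : ℝ} {u : ℕ → ℝ → ℝ}

lemma sinh_mul_one (h : CoshDerivs K u) {t : ℝ} (ht : 0 < t) :
    sinh t * u 1 t = -(K * sin (K * t)) :=
  eq_of_hasDerivAt_of_eqOn isOpen_Ioi h.zero ht (h.hasDerivAt 0 t ht) (hasDerivAt_cos_mul K t)

lemma recurrence (h : CoshDerivs K u) (n : ℕ) {t : ℝ} (ht : 0 < t) :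
    sinh t ^ 2 * u (n + 2) t + (2 * n + 1) * cosh t * u (n + 1) t + (K ^ 2 + n ^ 2) * u n t
      = 0 := by
  induction n generalizing t with
  | zero =>
    have hsin : HasDerivAt (fun s => -(K * sin (K * s))) (-(K * (K * cos (K * t)))) t :=
      (((hasDerivAt_id t).const_mul K).sin.congr_deriv (by simp; ring)).const_mul K |>.neg
    have := eq_of_hasDerivAt_of_eqOn isOpen_Ioi (fun s hs => h.sinh_mul_one hs) ht
      ((hasDerivAt_sinh t).mul (h.hasDerivAt 1 t ht)) hsin
    rw [h.zero t ht]
    push_cast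
    linear_combination this
  | succ n ih =>
    have hd := ((((hasDerivAt_sinh t).pow 2).mul (h.hasDerivAt (n + 2) t ht)).add
      (((hasDerivAt_cosh t).const_mul (2 * (n : ℝ) + 1)).mul (h.hasDerivAt (n + 1) t ht))).add
      ((h.hasDerivAt n t ht).const_mul (K ^ 2 + (n : ℝ) ^ 2))
    have h0 := eq_of_hasDerivAt_of_eqOn isOpen_Ioi (fun s hs => ih hs) ht hd (hasDerivAt_const t 0)
    simp only [Pi.pow_apply, show n + 2 + 1 = n + 1 + 2 from rfl] at h0
    refine mul_left_cancel₀ (sinh_pos_iff.2 ht).ne' ?_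
    push_cast
    linear_combination h0

lemma hasDerivAt_sinh_pow_mul (h : CoshDerivs K u) (n : ℕ) {t : ℝ} (ht : 0 < t) :
    HasDerivAt (fun s => sinh s ^ (2 * n + 1) * u (n + 1) s)
      (-((K ^ 2 + n ^ 2) * sinh t ^ (2 * n) * u n t)) t := by
  refine (((hasDerivAt_sinh t).pow (2 * n + 1)).mul (h.hasDerivAt (n + 1) t ht)).congr_deriv ?_
  simp only [Nat.add_sub_cancel, Pi.pow_apply]
  push_cast
  linear_combination sinh t ^ (2 * n) * h.recurrence n ht

lemma hasDerivAt_div_sinh_pow (h : CoshDerivs K u) (n : ℕ) {t : ℝ} (ht : 0 < t) :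
    HasDerivAt (u n) ((sinh t ^ (2 * n + 1) * u (n + 1) t) / sinh t ^ (2 * n)) t :=
  (h.hasDerivAt n t ht).congr_deriv (by field_simp [(sinh_pos_iff.2 ht).ne']; ring)

lemma tendsto_sinh_pow_mul (h : CoshDerivs K u) (hK : K ≠ 0) (n : ℕ)
    (hn : Tendsto (u n) (𝓝[>] 0) (𝓝 (limitAtOne K n))) :
    Tendsto (fun t => sinh t ^ (2 * n + 1) * u (n + 1) t) (𝓝[>] 0) (𝓝 0) := by
  rcases Nat.eq_zero_or_pos n with rfl | hn0
  · have : Tendsto (fun t => -(K * sin (K * t))) (𝓝[>] 0) (𝓝 0) := by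
      simpa using ((continuous_sin.comp (continuous_const_mul K)).tendsto' 0 0 (by simp)).neg
        |>.const_mul K |>.mono_left nhdsWithin_le_nhds
    exact this.congr' (eventually_nhdsWithin_of_forall fun t ht => by simp [h.sinh_mul_one ht])
  · exact tendsto_zero_of_hasDerivAt_div_sinh_pow hn0.ne' (by positivity) (limitAtOne_ne_zero hK n)
      hn (fun t ht => h.hasDerivAt_div_sinh_pow n ht) fun t ht => h.hasDerivAt_sinh_pow_mul n ht

-- L'Hôpital on `u (n + 1) = (sinh ^ (2n+1) * u (n + 1)) / sinh ^ (2n+1)`.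
lemma tendsto_limitAtOne (h : CoshDerivs K u) (hK : K ≠ 0) (n : ℕ) :
    Tendsto (u n) (𝓝[>] 0) (𝓝 (limitAtOne K n)) := by
  induction n with
  | zero =>
    rw [limitAtOne_zero]
    refine (((continuous_cos.comp (continuous_const_mul K)).tendsto' 0 1 (by simp)).mono_left
      nhdsWithin_le_nhds).congr' (eventually_nhdsWithin_of_forall fun t ht => (h.zero t ht).symm)
  | succ n ih =>
    have hpos : ∀ᶠ t in 𝓝[>] (0 : ℝ), 0 < t := self_mem_nhdsWithin
    have hquot : Tendsto (fun t => -(K ^ 2 + n ^ 2) * u n t / ((2 * n + 1) * cosh t)) (𝓝[>] 0)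
        (𝓝 (limitAtOne K (n + 1))) := by
      have hcosh : Tendsto cosh (𝓝[>] 0) (𝓝 1) :=
        (continuous_cosh.tendsto' 0 1 cosh_zero).mono_left nhdsWithin_le_nhds
      have := (ih.const_mul (-(K ^ 2 + n ^ 2))).div (hcosh.const_mul (2 * (n : ℝ) + 1))
        (by positivity)
      rw [limitAtOne_succ, div_mul_eq_mul_div]
      simpa [Pi.div_def] using this
    have hsinh : Tendsto (fun t => sinh t ^ (2 * n + 1)) (𝓝[>] 0) (𝓝 0) :=
      ((continuous_sinh.pow _).tendsto' 0 0 (by simp)).mono_left nhdsWithin_le_nhds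
    refine (HasDerivAt.lhopital_zero_nhdsGT (hpos.mono fun t ht => h.hasDerivAt_sinh_pow_mul n ht)
      (hpos.mono fun t ht => (hasDerivAt_sinh t).pow (2 * n + 1)) ?_
      (h.tendsto_sinh_pow_mul hK n ih) hsinh (hquot.congr' ?_)).congr' ?_
    · filter_upwards [hpos] with t ht
      have := sinh_pos_iff.2 ht
      positivity
    · filter_upwards [hpos] with t ht
      have := (sinh_pos_iff.2 ht).ne'
      simp only [Nat.add_sub_cancel]
      field_simp
      push_cast
      ring
    · filter_upwards [hpos] with t ht
      have := (sinh_pos_iff.2 ht).ne'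
      simp only [Pi.pow_apply]
      field_simp

lemma antitoneOn_energy (h : CoshDerivs K u) (n : ℕ) :
    AntitoneOn (fun t => (sinh t * u (n + 1) t) ^ 2 + (K ^ 2 + n ^ 2) * u n t ^ 2) (Ioi 0) := by
  refine antitoneOn_of_hasDerivAt_nonpos (convex_Ioi 0)
    (f' := fun t => -(4 * n * sinh t * cosh t * u (n + 1) t ^ 2)) (fun t ht => ?_) fun t ht => ?_
  · have hd := (((hasDerivAt_sinh t).mul (h.hasDerivAt (n + 1) t ht)).pow 2).add
      (((h.hasDerivAt n t ht).pow 2).const_mul (K ^ 2 + (n : ℝ) ^ 2))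
    refine hd.congr_deriv ?_
    simp only [Pi.mul_apply]
    push_cast
    linear_combination 2 * sinh t * u (n + 1) t * h.recurrence n ht
  · have := sinh_pos_iff.2 (mem_Ioi.1 ht)
    have := cosh_pos t
    exact neg_nonpos.2 (by positivity)

lemma abs_le_abs_limitAtOne (h : CoshDerivs K u) (hK : K ≠ 0) (n : ℕ) {t : ℝ} (ht : 0 < t) :
    |u n t| ≤ |limitAtOne K n| := by
  have hA : 0 < K ^ 2 + (n : ℝ) ^ 2 := by positivity
  have hlim : Tendsto (fun t => (sinh t * u (n + 1) t) ^ 2 + (K ^ 2 + n ^ 2) * u n t ^ 2) (𝓝[>] 0)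
      (𝓝 ((0 * limitAtOne K (n + 1)) ^ 2 + (K ^ 2 + n ^ 2) * limitAtOne K n ^ 2)) :=
    ((((continuous_sinh.tendsto' 0 0 sinh_zero).mono_left nhdsWithin_le_nhds).mul
      (h.tendsto_limitAtOne hK (n + 1))).pow 2).add
      (((h.tendsto_limitAtOne hK n).pow 2).const_mul _)
  have hle := ge_of_tendsto hlim (by
    filter_upwards [Ioo_mem_nhdsGT ht] with s hs
    exact h.antitoneOn_energy n hs.1 ht hs.2.le)
  rw [zero_mul, zero_pow two_ne_zero, zero_add] at hle
  exact sq_le_sq.1 (le_of_mul_le_mul_left (by nlinarith [sq_nonneg (sinh t * u (n + 1) t)]) hA)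

end CoshDerivs

lemma hasDerivAt_iteratedDeriv_comp_cosh {f : ℝ → ℝ} {n : ℕ}
    (hf : ContDiffOn ℝ (n + 1) f (Ioi 1)) {t : ℝ} (ht : 0 < t) :
    HasDerivAt (fun s => iteratedDeriv n f (cosh s))
      (sinh t * iteratedDeriv (n + 1) f (cosh t)) t := by
  have hx : Ioi 1 ∈ 𝓝 (cosh t) := isOpen_Ioi.mem_nhds (one_lt_cosh.2 ht.ne')
  have hdiff : DifferentiableAt ℝ (iteratedDeriv n f) (cosh t) :=
    ((hf.differentiableOn_iteratedDerivWithin (by norm_cast; omega) isOpen_Ioi.uniqueDiffOn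
      _ (mem_of_mem_nhds hx)).differentiableAt hx).congr_of_eventuallyEq
      (eventually_of_mem hx fun y hy => (iteratedDerivWithin_of_isOpen isOpen_Ioi hy).symm)
  rw [iteratedDeriv_succ, mul_comm]
  exact hdiff.hasDerivAt.comp t (hasDerivAt_cosh t)

lemma coshDerivs_iteratedDeriv (K : ℝ) :
    CoshDerivs K (fun n t => iteratedDeriv n (fun x => cos (K * arccosh x)) (cosh t)) where
  zero t ht := by
    rw [iteratedDeriv_zero]
    exact congrArg (fun s => cos (K * s)) (arcosh_cosh ht.le)
  hasDerivAt _ _ ht := hasDerivAt_iteratedDeriv_comp_cosh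
    (contDiff_cos.comp_contDiffOn (contDiffOn_const.mul contDiffOn_arcosh)) ht

lemma tendsto_arcosh_nhdsGT_one : Tendsto arcosh (𝓝[>] 1) (𝓝[>] 0) := by
  have h := (continuousOn_arcosh.continuousWithinAt self_mem_Ici).tendsto.mono_left
    (nhdsWithin_mono 1 Ioi_subset_Ici_self)
  rw [arcosh_zero] at h
  exact tendsto_nhdsWithin_iff.2 ⟨h, eventually_nhdsWithin_of_forall fun _ hx => arcosh_pos hx⟩

theorem statement15_general (K : ℝ) (hK : 1 ≤ K) (n : ℕ) :
    (∀ x ∈ Set.Ioi (1 : ℝ),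
      |iteratedDeriv n (fun x : ℝ => Real.cos (K * arccosh x)) x| ≤
        (1 / (Nat.doubleFactorial (2 * n - 1) : ℝ)) *
          ∏ m ∈ Finset.range n, (K ^ 2 + (m : ℝ) ^ 2)) ∧
    Tendsto (fun x : ℝ => iteratedDeriv n (fun x : ℝ => Real.cos (K * arccosh x)) x)
      (nhdsWithin 1 (Set.Ioi 1))
      (nhds ((-1 : ℝ) ^ n / (Nat.doubleFactorial (2 * n - 1) : ℝ) *
        ∏ m ∈ Finset.range n, (K ^ 2 + (m : ℝ) ^ 2))) := by
  have hK0 : K ≠ 0 := by positivity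
  have h := coshDerivs_iteratedDeriv K
  have hcosh : ∀ x ∈ Ioi (1 : ℝ), iteratedDeriv n (fun x => cos (K * arccosh x)) x =
      iteratedDeriv n (fun x => cos (K * arccosh x)) (cosh (arcosh x)) := fun x hx => by
    rw [cosh_arcosh (le_of_lt hx)]
  refine ⟨fun x hx => ?_, ?_⟩
  · rw [hcosh x hx, ← abs_limitAtOne]
    exact h.abs_le_abs_limitAtOne hK0 n (arcosh_pos hx)
  · exact ((h.tendsto_limitAtOne hK0 n).comp tendsto_arcosh_nhdsGT_one).congr'
      (eventually_nhdsWithin_of_forall fun x hx => (hcosh x hx).symm)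

/-- Lemma `l.1`: for `K ≥ 1` and `n ≥ 1`, for all `x > 1`,
`|dⁿ/dxⁿ cos(K·arccosh x)| ≤ (1/(2n−1)!!)·∏_{m=0}^{n−1}(K²+m²)`, and
`lim_{x↓1} dⁿ/dxⁿ cos(K·arccosh x) = ((−1)ⁿ/(2n−1)!!)·∏_{m=0}^{n−1}(K²+m²)`. -/
theorem statement15 (K : ℝ) (hK : 1 ≤ K) (n : ℕ) (hn : 1 ≤ n) :
    (∀ x ∈ Set.Ioi (1 : ℝ),
      |iteratedDeriv n (fun x : ℝ => Real.cos (K * arccosh x)) x| ≤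
        (1 / (Nat.doubleFactorial (2 * n - 1) : ℝ)) *
          ∏ m ∈ Finset.range n, (K ^ 2 + (m : ℝ) ^ 2)) ∧
    Tendsto (fun x : ℝ => iteratedDeriv n (fun x : ℝ => Real.cos (K * arccosh x)) x)
      (nhdsWithin 1 (Set.Ioi 1))
      (nhds ((-1 : ℝ) ^ n / (Nat.doubleFactorial (2 * n - 1) : ℝ) *
        ∏ m ∈ Finset.range n, (K ^ 2 + (m : ℝ) ^ 2))) :=
  statement15_general K hK n
end
end

section
/- For each integer n ≥ 1 there exists a constant Cₙ < ∞ such that for every real K ≥ 1 and every x ∈ (0,1): |dⁿ/dxⁿ cosh(K·arccos x)| ≤ Cₙ·Kⁿ·e^{Kπ/2}. -/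
/-!
`f = cosh (K arccos ·)` solves the Chebyshev equation `(1 - x²) f'' = x f' + K² f`; differentiating
it `m` times gives `(1 - x²) f⁽ᵐ⁺²⁾ = (2m + 1) x f⁽ᵐ⁺¹⁾ + (m² + K²) f⁽ᵐ⁾`. For `x ≤ 1/2` the factor
`1 - x²` is at least `3/4`, and this recurrence, started from `|f| ≤ e^{Kπ/2}` and
`|f'| ≤ 4K e^{Kπ/2}`, bounds `f⁽ⁿ⁾` by `Cₙ Kⁿ e^{Kπ/2}`.

Near `x = 1` the recurrence degenerates. There one uses its divergence form
`((1 - x²)^{m+3/2} f⁽ᵐ⁺²⁾)' = ((m + 1)² + K²) (1 - x²)^{m+1/2} f⁽ᵐ⁺¹⁾` and integrates from the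
endpoint `1`, where the weighted derivative vanishes: `|f⁽ᵐ⁺²⁾(x)| ≤ ((m + 1)² + K²) sup |f⁽ᵐ⁺¹⁾|`.
Each derivative now costs `K²` instead of `K`, but for `x ≥ 1/2` we have `arccos x ≤ π/3`, and
`K²ⁿ e^{Kπ/3} ≤ (6/π)ⁿ n! Kⁿ e^{Kπ/2}`.
-/

open Real Filter Set Topology
open scoped ContDiff Nat

theorem Real.cosh_le_exp {t : ℝ} (ht : 0 ≤ t) : cosh t ≤ exp t := by
  rw [cosh_eq]
  linarith [exp_le_exp.2 (by linarith : -t ≤ t)]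

theorem Real.sinh_le_mul_exp (t : ℝ) : sinh t ≤ t * exp t := by
  have h : exp (-t) = exp (-2 * t) * exp t := by rw [← exp_add]; ring_nf
  rw [sinh_eq, h]
  nlinarith [add_one_le_exp (-2 * t), exp_pos t]

theorem Real.arccos_le_pi_div_two_mul_sqrt {x : ℝ} (hx : 0 ≤ x) :
    arccos x ≤ π / 2 * √(1 - x ^ 2) := by
  have h := mul_le_sin (arccos_nonneg x) (arccos_le_pi_div_two.2 hx)
  rw [sin_arccos] at h
  rw [div_mul_eq_mul_div, div_le_iff₀ pi_pos] at h
  nlinarith [pi_pos]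

theorem Real.arccos_le_pi_div_three {x : ℝ} (hx : 1 / 2 ≤ x) : arccos x ≤ π / 3 := by
  calc arccos x ≤ arccos (1 / 2) := antitone_arccos hx
    _ = π / 3 := by
      rw [← cos_pi_div_three, arccos_cos (by positivity) (by linarith [pi_pos])]

theorem hasDerivAt_one_sub_sq (x : ℝ) : HasDerivAt (fun y : ℝ => 1 - y ^ 2) (-(2 * x)) x := by
  simpa using (hasDerivAt_pow 2 x).const_sub 1

theorem hasDerivAt_iteratedDeriv_of_contDiffAt {𝕜 F : Type*} [NontriviallyNormedField 𝕜]
    [NormedAddCommGroup F] [NormedSpace 𝕜 F] {f : 𝕜 → F} {x : 𝕜} (hf : ContDiffAt 𝕜 ∞ f x)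
    (m : ℕ) : HasDerivAt (iteratedDeriv m f) (iteratedDeriv (m + 1) f x) x := by
  rw [iteratedDeriv_succ]
  refine DifferentiableAt.hasDerivAt ?_
  rw [iteratedDeriv_eq_equiv_comp]
  exact ((ContinuousMultilinearMap.piFieldEquiv 𝕜 (Fin m) F).symm.differentiableAt).comp x
    (hf.differentiableAt_iteratedFDeriv (by exact_mod_cast WithTop.coe_lt_top _))

theorem abs_le_mul_sub_of_tendsto_nhdsLT {p p' : ℝ → ℝ} {x b M : ℝ} (hxb : x < b)
    (hp : ∀ t ∈ Ico x b, HasDerivAt p (p' t) t) (hM : ∀ t ∈ Ico x b, |p' t| ≤ M)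
    (hlim : Tendsto p (𝓝[<] b) (𝓝 0)) : |p x| ≤ M * (b - x) := by
  have hmvt : ∀ y ∈ Ico x b, |p y - p x| ≤ M * (y - x) := by
    intro y hy
    have := (convex_Ico x b).norm_image_sub_le_of_norm_hasDerivWithin_le
      (fun t ht => (hp t ht).hasDerivWithinAt) hM (left_mem_Ico.2 hxb) hy
    rwa [Real.norm_eq_abs, Real.norm_eq_abs, abs_of_nonneg (sub_nonneg.2 hy.1)] at this
  have hl : Tendsto (fun y => |p y - p x|) (𝓝[<] b) (𝓝 |p x|) := by
    simpa using (hlim.sub_const (p x)).abs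
  have hr : Tendsto (fun y => M * (y - x)) (𝓝[<] b) (𝓝 (M * (b - x))) :=
    tendsto_nhdsWithin_of_tendsto_nhds ((continuous_sub_right x).tendsto b |>.const_mul _)
  refine le_of_tendsto_of_tendsto hl hr ?_
  filter_upwards [Ico_mem_nhdsLT hxb] with y hy using hmvt y hy

section ChebyshevEquation

variable {f : ℝ → ℝ} {c : ℝ}

theorem iteratedDeriv_chebyshev_equation {s : Set ℝ} (hs : IsOpen s)
    (hf : ∀ x ∈ s, ContDiffAt ℝ ∞ f x)
    (hode : ∀ x ∈ s, (1 - x ^ 2) * iteratedDeriv 2 f x = x * iteratedDeriv 1 f x + c * f x)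
    (m : ℕ) : ∀ x ∈ s, (1 - x ^ 2) * iteratedDeriv (m + 2) f x =
      (2 * m + 1) * x * iteratedDeriv (m + 1) f x + (m ^ 2 + c) * iteratedDeriv m f x := by
  induction m with
  | zero => simpa using hode
  | succ m ih =>
    intro x hx
    have hd := hasDerivAt_iteratedDeriv_of_contDiffAt (hf x hx)
    have hlhs := (hasDerivAt_one_sub_sq x).mul (hd (m + 2))
    have hrhs := ((((hasDerivAt_id' x).const_mul (2 * (m : ℝ) + 1)).mul (hd (m + 1))).add
      ((hd m).const_mul ((m : ℝ) ^ 2 + c)))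
    have heq : (fun y => (1 - y ^ 2) * iteratedDeriv (m + 2) f y) =ᶠ[𝓝 x] fun y =>
        (2 * m + 1) * y * iteratedDeriv (m + 1) f y + (m ^ 2 + c) * iteratedDeriv m f y := by
      filter_upwards [hs.mem_nhds hx] with y hy using ih y hy
    have := hlhs.unique (hrhs.congr_of_eventuallyEq heq)
    push_cast
    linear_combination this

theorem hasDerivAt_one_sub_sq_pow_mul_sqrt (m : ℕ) {x : ℝ} (hx : 0 < 1 - x ^ 2) :
    HasDerivAt (fun y : ℝ => (1 - y ^ 2) ^ (m + 1) * √(1 - y ^ 2))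
      (-(2 * m + 3) * x * ((1 - x ^ 2) ^ m * √(1 - x ^ 2))) x := by
  have hpow := (hasDerivAt_one_sub_sq x).fun_pow (m + 1)
  have hsqrt := (hasDerivAt_one_sub_sq x).sqrt hx.ne'
  refine (hpow.mul hsqrt).congr_deriv ?_
  have hs : 0 < √(1 - x ^ 2) := Real.sqrt_pos.2 hx
  field_simp
  rw [Real.sq_sqrt hx.le, Nat.add_sub_cancel]
  push_cast
  ring

theorem hasDerivAt_chebyshev_weighted_iteratedDeriv
    (hf : ∀ x ∈ Ioo (-1 : ℝ) 1, ContDiffAt ℝ ∞ f x)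
    (hode : ∀ x ∈ Ioo (-1 : ℝ) 1,
      (1 - x ^ 2) * iteratedDeriv 2 f x = x * iteratedDeriv 1 f x + c * f x)
    (m : ℕ) {x : ℝ} (hx : x ∈ Ioo (-1 : ℝ) 1) :
    HasDerivAt (fun y => (1 - y ^ 2) ^ (m + 1) * √(1 - y ^ 2) * iteratedDeriv (m + 2) f y)
      (((m + 1) ^ 2 + c) * ((1 - x ^ 2) ^ m * √(1 - x ^ 2) * iteratedDeriv (m + 1) f x)) x := by
  have hx2 : 0 < 1 - x ^ 2 := by nlinarith [hx.1, hx.2]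
  refine ((hasDerivAt_one_sub_sq_pow_mul_sqrt m hx2).mul
    (hasDerivAt_iteratedDeriv_of_contDiffAt (hf x hx) (m + 2))).congr_deriv ?_
  have := iteratedDeriv_chebyshev_equation isOpen_Ioo hf hode (m + 1) x hx
  push_cast at this ⊢
  linear_combination (1 - x ^ 2) ^ m * √(1 - x ^ 2) * this

theorem tendsto_chebyshev_weighted_iteratedDeriv (hf : ∀ x ∈ Ioo (-1 : ℝ) 1, ContDiffAt ℝ ∞ f x)
    (hode : ∀ x ∈ Ioo (-1 : ℝ) 1,
      (1 - x ^ 2) * iteratedDeriv 2 f x = x * iteratedDeriv 1 f x + c * f x)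
    {m : ℕ} {x B₀ B₁ : ℝ} (hx : x ∈ Ioo (-1 : ℝ) 1)
    (h₀ : ∀ t ∈ Ioo x 1, |iteratedDeriv m f t| ≤ B₀)
    (h₁ : ∀ t ∈ Ioo x 1, |iteratedDeriv (m + 1) f t| ≤ B₁) :
    Tendsto (fun y => (1 - y ^ 2) ^ (m + 1) * √(1 - y ^ 2) * iteratedDeriv (m + 2) f y)
      (𝓝[<] 1) (𝓝 0) := by
  have hsqrt : Tendsto (fun y : ℝ => √(1 - y ^ 2) * ((2 * m + 1) * B₁ + |m ^ 2 + c| * B₀))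
      (𝓝[<] 1) (𝓝 0) := by
    have : Continuous fun y : ℝ => √(1 - y ^ 2) * ((2 * m + 1) * B₁ + |m ^ 2 + c| * B₀) := by
      fun_prop
    simpa using (this.tendsto 1).mono_left nhdsWithin_le_nhds
  refine squeeze_zero_norm' ?_ hsqrt
  filter_upwards [Ioo_mem_nhdsLT hx.2] with y hy
  have hy' : y ∈ Ioo (-1 : ℝ) 1 := ⟨hx.1.trans hy.1, hy.2⟩
  have hy2 : 0 < 1 - y ^ 2 := by nlinarith [hy'.1, hy'.2]
  have hyabs : |y| ≤ 1 := abs_le.2 ⟨hy'.1.le, hy'.2.le⟩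
  have hweight : (1 - y ^ 2) ^ m ≤ 1 := pow_le_one₀ hy2.le (by nlinarith)
  have hode' := iteratedDeriv_chebyshev_equation isOpen_Ioo hf hode m y hy'
  have hbracket : |(2 * m + 1) * y * iteratedDeriv (m + 1) f y + (m ^ 2 + c) * iteratedDeriv m f y|
      ≤ (2 * m + 1) * B₁ + |m ^ 2 + c| * B₀ := by
    refine (abs_add_le _ _).trans (add_le_add ?_ ?_) <;> rw [abs_mul]
    · rw [abs_mul, abs_of_nonneg (by positivity : (0 : ℝ) ≤ 2 * m + 1)]
      have := h₁ y hy
      calc (2 * m + 1) * |y| * |iteratedDeriv (m + 1) f y| ≤ (2 * m + 1) * 1 * B₁ := by gcongr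
        _ = (2 * m + 1) * B₁ := by ring
    · exact mul_le_mul_of_nonneg_left (h₀ y hy) (abs_nonneg _)
  calc ‖(1 - y ^ 2) ^ (m + 1) * √(1 - y ^ 2) * iteratedDeriv (m + 2) f y‖
      = (1 - y ^ 2) ^ m * √(1 - y ^ 2) * |(1 - y ^ 2) * iteratedDeriv (m + 2) f y| := by
        rw [Real.norm_eq_abs, abs_mul, abs_mul, abs_mul, abs_of_pos hy2,
          abs_of_nonneg (pow_nonneg hy2.le _), abs_of_nonneg (Real.sqrt_nonneg _)]
        ring
    _ ≤ 1 * √(1 - y ^ 2) * ((2 * m + 1) * B₁ + |m ^ 2 + c| * B₀) := by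
        rw [hode']
        gcongr
    _ = √(1 - y ^ 2) * ((2 * m + 1) * B₁ + |m ^ 2 + c| * B₀) := by rw [one_mul]

theorem abs_iteratedDeriv_le_of_tendsto_weighted (hf : ∀ x ∈ Ioo (-1 : ℝ) 1, ContDiffAt ℝ ∞ f x)
    (hode : ∀ x ∈ Ioo (-1 : ℝ) 1,
      (1 - x ^ 2) * iteratedDeriv 2 f x = x * iteratedDeriv 1 f x + c * f x)
    {m : ℕ} {x B : ℝ} (hx : x ∈ Ico (0 : ℝ) 1)
    (hB : ∀ t ∈ Ico x 1, |iteratedDeriv (m + 1) f t| ≤ B)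
    (hlim : Tendsto (fun y => (1 - y ^ 2) ^ (m + 1) * √(1 - y ^ 2) * iteratedDeriv (m + 2) f y)
      (𝓝[<] 1) (𝓝 0)) :
    |iteratedDeriv (m + 2) f x| ≤ |(m + 1) ^ 2 + c| * B := by
  set w := (1 - x ^ 2) ^ m * √(1 - x ^ 2)
  have hx2 : 0 < 1 - x ^ 2 := by nlinarith [hx.1, hx.2]
  have hderiv : ∀ t ∈ Ico x 1,
      |((m + 1) ^ 2 + c) * ((1 - t ^ 2) ^ m * √(1 - t ^ 2) * iteratedDeriv (m + 1) f t)| ≤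
        |(m + 1) ^ 2 + c| * w * B := by
    intro t ht
    have ht2 : 0 ≤ 1 - t ^ 2 := by nlinarith [ht.1, ht.2, hx.1]
    have hle : 1 - t ^ 2 ≤ 1 - x ^ 2 := by nlinarith [ht.1, hx.1]
    rw [abs_mul, abs_mul, abs_mul, abs_of_nonneg (pow_nonneg ht2 _),
      abs_of_nonneg (sqrt_nonneg _), mul_assoc _ w]
    gcongr
    · exact mul_le_mul (pow_le_pow_left₀ ht2 hle m) (sqrt_le_sqrt hle) (sqrt_nonneg _)
        (pow_nonneg hx2.le _)
    · exact hB t ht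
  have hpx := abs_le_mul_sub_of_tendsto_nhdsLT hx.2
    (fun t ht => hasDerivAt_chebyshev_weighted_iteratedDeriv hf hode m
      ⟨by linarith [ht.1, hx.1], ht.2⟩) hderiv hlim
  have hpx' : |(1 - x ^ 2) ^ (m + 1) * √(1 - x ^ 2) * iteratedDeriv (m + 2) f x| =
      w * (1 - x) * ((1 + x) * |iteratedDeriv (m + 2) f x|) := by
    rw [abs_mul, abs_mul, abs_of_pos (pow_pos hx2 _), abs_of_nonneg (sqrt_nonneg _)]
    ring
  -- the weights cost a factor `(1 - x) / (1 - x²) = 1 / (1 + x) ≤ 1`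
  have key : (1 + x) * |iteratedDeriv (m + 2) f x| ≤ |(m + 1) ^ 2 + c| * B := by
    refine le_of_mul_le_mul_left ?_ (mul_pos (by positivity) (by linarith [hx.2]) : 0 < w * (1 - x))
    linarith
  nlinarith [abs_nonneg (iteratedDeriv (m + 2) f x), hx.1]

theorem abs_iteratedDeriv_le_near_one
    (hf : ∀ x ∈ Ioo (-1 : ℝ) 1, ContDiffAt ℝ ∞ f x)
    (hode : ∀ x ∈ Ioo (-1 : ℝ) 1,
      (1 - x ^ 2) * iteratedDeriv 2 f x = x * iteratedDeriv 1 f x + c * f x)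
    {x₀ L B : ℝ} (hx₀ : 0 ≤ x₀) (hL : 1 ≤ L) (hc : |c| ≤ L)
    (h₀ : ∀ x ∈ Ico x₀ 1, |f x| ≤ B) (h₁ : ∀ x ∈ Ico x₀ 1, |iteratedDeriv 1 f x| ≤ 4 * L * B)
    (m : ℕ) : ∀ x ∈ Ico x₀ 1, |iteratedDeriv m f x| ≤ 4 ^ m * (m ! : ℝ) ^ 2 * L ^ m * B := by
  induction m using Nat.twoStepInduction with
  | zero => simpa using h₀
  | one => simpa using h₁
  | more m ih₀ ih₁ =>
    intro x hx
    have hsub : Ioo x 1 ⊆ Ico x₀ 1 := fun t ht => ⟨hx.1.trans ht.1.le, ht.2⟩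
    have hlim := tendsto_chebyshev_weighted_iteratedDeriv hf hode ⟨by linarith [hx.1], hx.2⟩
      (fun t ht => ih₀ t (hsub ht)) (fun t ht => ih₁ t (hsub ht))
    have hstep := abs_iteratedDeriv_le_of_tendsto_weighted hf hode ⟨hx₀.trans hx.1, hx.2⟩
      (fun t ht => ih₁ t ⟨hx.1.trans ht.1, ht.2⟩) hlim
    refine hstep.trans ?_
    have hB : 0 ≤ B := (abs_nonneg _).trans (h₀ x hx)
    have hcoef : |((m : ℝ) + 1) ^ 2 + c| ≤ 4 * ((m : ℝ) + 2) ^ 2 * L := by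
      have hm : (0 : ℝ) ≤ m := m.cast_nonneg
      refine (abs_add_le _ _).trans ?_
      rw [abs_of_nonneg (by positivity)]
      nlinarith
    have hfact : 4 ^ (m + 2) * ((m + 2)! : ℝ) ^ 2 * L ^ (m + 2) * B =
        4 * ((m : ℝ) + 2) ^ 2 * L * (4 ^ (m + 1) * ((m + 1)! : ℝ) ^ 2 * L ^ (m + 1) * B) := by
      push_cast [Nat.factorial_succ (m + 1)]; ring
    rw [hfact]
    have : (0 : ℝ) ≤ L := by linarith
    gcongr

end ChebyshevEquation

theorem abs_le_of_chebyshev_recurrence {a : ℕ → ℝ} {x c K B : ℝ} (hx : x ^ 2 ≤ 1 / 4)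
    (hK : 1 ≤ K) (hc : |c| ≤ K ^ 2)
    (hrec : ∀ m : ℕ, (1 - x ^ 2) * a (m + 2) = (2 * m + 1) * x * a (m + 1) + (m ^ 2 + c) * a m)
    (h₀ : |a 0| ≤ B) (h₁ : |a 1| ≤ 4 * K * B) (m : ℕ) :
    |a m| ≤ 4 ^ m * (m ! : ℝ) ^ 2 * K ^ m * B := by
  induction m using Nat.twoStepInduction with
  | zero => simpa using h₀
  | one => simpa using h₁
  | more m ih₀ ih₁ =>
    set Q := 4 ^ m * (m ! : ℝ) ^ 2 * K ^ m * B
    have hQ : 0 ≤ Q := by have := (abs_nonneg _).trans h₀; positivity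
    have e₁ : 4 ^ (m + 1) * ((m + 1)! : ℝ) ^ 2 * K ^ (m + 1) * B = 4 * (m + 1) ^ 2 * K * Q := by
      push_cast [Nat.factorial_succ]; ring
    have e₂ : 4 ^ (m + 2) * ((m + 2)! : ℝ) ^ 2 * K ^ (m + 2) * B =
        16 * (m + 2) ^ 2 * (m + 1) ^ 2 * K ^ 2 * Q := by
      push_cast [Nat.factorial_succ]; ring
    rw [e₁] at ih₁
    rw [e₂]
    have hxabs : |x| ≤ 1 / 2 := abs_le.2 ⟨by nlinarith, by nlinarith⟩
    have hstep : 3 / 4 * |a (m + 2)| ≤ (2 * m + 1) / 2 * |a (m + 1)| + |m ^ 2 + c| * |a m| :=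
      calc 3 / 4 * |a (m + 2)| ≤ |(1 - x ^ 2) * a (m + 2)| := by
            rw [abs_mul, abs_of_pos (show 0 < 1 - x ^ 2 by linarith)]; gcongr; linarith
        _ ≤ (2 * m + 1) * |x| * |a (m + 1)| + |m ^ 2 + c| * |a m| := by
            rw [hrec]
            refine (abs_add_le _ _).trans_eq ?_
            rw [abs_mul, abs_mul, abs_mul, abs_of_nonneg (by positivity : (0 : ℝ) ≤ 2 * m + 1)]
        _ ≤ (2 * m + 1) / 2 * |a (m + 1)| + |m ^ 2 + c| * |a m| := by
            have hm : (0 : ℝ) ≤ m := m.cast_nonneg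
            gcongr
            nlinarith
    have hpoly :
        2 * (2 * (m : ℝ) + 1) * (m + 1) ^ 2 + (m ^ 2 + 1) ≤ 12 * (m + 2) ^ 2 * (m + 1) ^ 2 := by
      have : (0 : ℝ) ≤ m := m.cast_nonneg
      nlinarith [mul_nonneg this (sq_nonneg ((m : ℝ) + 1))]
    have hK2 : K ≤ K ^ 2 := by nlinarith
    have bound₁ : (2 * m + 1) / 2 * |a (m + 1)| ≤ 2 * (2 * m + 1) * (m + 1) ^ 2 * K ^ 2 * Q := by
      calc (2 * m + 1) / 2 * |a (m + 1)| ≤ (2 * m + 1) / 2 * (4 * (m + 1) ^ 2 * K * Q) := by gcongr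
        _ ≤ 2 * (2 * m + 1) * (m + 1) ^ 2 * K ^ 2 * Q := by
            have : (0 : ℝ) ≤ 2 * (2 * m + 1) * (m + 1) ^ 2 * Q := by positivity
            nlinarith
    have bound₀ : |m ^ 2 + c| * |a m| ≤ (m ^ 2 + 1) * K ^ 2 * Q := by
      have hcoef : |m ^ 2 + c| ≤ m ^ 2 + K ^ 2 :=
        (abs_add_le _ _).trans (by rw [abs_of_nonneg (by positivity)]; linarith)
      calc |m ^ 2 + c| * |a m| ≤ (m ^ 2 + K ^ 2) * Q :=
            mul_le_mul hcoef ih₀ (abs_nonneg _) (by positivity)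
        _ ≤ (m ^ 2 + 1) * K ^ 2 * Q := by
            have : (0 : ℝ) ≤ (m : ℝ) ^ 2 * Q := by positivity
            nlinarith
    have : 0 ≤ K ^ 2 * Q := by positivity
    nlinarith

/-- `x ↦ cosh (K arccos x)`, the Chebyshev function `T_{iK}`. -/
noncomputable def coshArccos (K : ℝ) : ℝ → ℝ := fun x => cosh (K * arccos x)

theorem contDiffAt_coshArccos (K : ℝ) : ∀ x ∈ Ioo (-1 : ℝ) 1, ContDiffAt ℝ ∞ (coshArccos K) x :=
  fun x hx => contDiff_cosh.contDiffAt.comp x ((contDiffAt_arccos hx.1.ne' hx.2.ne).const_smul K)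

theorem hasDerivAt_coshArccos (K : ℝ) {x : ℝ} (hx : x ∈ Ioo (-1 : ℝ) 1) :
    HasDerivAt (coshArccos K) (-(K * sinh (K * arccos x)) / √(1 - x ^ 2)) x :=
  ((hasDerivAt_arccos hx.1.ne' hx.2.ne).const_mul K).cosh.congr_deriv (by ring)

theorem sqrt_mul_deriv_coshArccos (K : ℝ) {x : ℝ} (hx : x ∈ Ioo (-1 : ℝ) 1) :
    √(1 - x ^ 2) * iteratedDeriv 1 (coshArccos K) x = -(K * sinh (K * arccos x)) := by
  have hx2 : 0 < 1 - x ^ 2 := by nlinarith [hx.1, hx.2]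
  rw [iteratedDeriv_one, (hasDerivAt_coshArccos K hx).deriv]
  field_simp

theorem coshArccos_chebyshev_equation (K : ℝ) : ∀ x ∈ Ioo (-1 : ℝ) 1,
    (1 - x ^ 2) * iteratedDeriv 2 (coshArccos K) x =
      x * iteratedDeriv 1 (coshArccos K) x + K ^ 2 * coshArccos K x := by
  intro x hx
  have hx2 : 0 < 1 - x ^ 2 := by nlinarith [hx.1, hx.2]
  have hs : 0 < √(1 - x ^ 2) := sqrt_pos.2 hx2
  have hlhs := ((hasDerivAt_one_sub_sq x).sqrt hx2.ne').mul
    (hasDerivAt_iteratedDeriv_of_contDiffAt (contDiffAt_coshArccos K x hx) 1)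
  have hrhs := (((hasDerivAt_arccos hx.1.ne' hx.2.ne).const_mul K).sinh.const_mul K).neg
  have heq : (fun y => √(1 - y ^ 2) * iteratedDeriv 1 (coshArccos K) y) =ᶠ[𝓝 x]
      fun y => -(K * sinh (K * arccos y)) := by
    filter_upwards [isOpen_Ioo.mem_nhds hx] with y hy using sqrt_mul_deriv_coshArccos K hy
  have h := hlhs.unique (hrhs.congr_of_eventuallyEq heq)
  field_simp at h
  rw [sq_sqrt hx2.le] at h
  change _ = _ * _ + _ * cosh (K * arccos x)
  linear_combination h

theorem abs_coshArccos_le {K : ℝ} (hK : 0 ≤ K) (x : ℝ) :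
    |coshArccos K x| ≤ exp (K * arccos x) := by
  rw [coshArccos, abs_of_pos (cosh_pos _)]
  exact cosh_le_exp (mul_nonneg hK (arccos_nonneg x))

theorem sqrt_mul_abs_deriv_coshArccos {K : ℝ} (hK : 0 ≤ K) {x : ℝ} (hx : x ∈ Ioo (-1 : ℝ) 1) :
    √(1 - x ^ 2) * |iteratedDeriv 1 (coshArccos K) x| = K * sinh (K * arccos x) := by
  rw [← abs_of_nonneg (sqrt_nonneg _), ← abs_mul, sqrt_mul_deriv_coshArccos K hx, abs_neg,
    abs_of_nonneg (mul_nonneg hK (sinh_nonneg_iff.2 (mul_nonneg hK (arccos_nonneg x))))]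

theorem abs_deriv_coshArccos_le_of_sq_le {K : ℝ} (hK : 0 ≤ K) {x : ℝ} (hx : x ^ 2 ≤ 1 / 4) :
    |iteratedDeriv 1 (coshArccos K) x| ≤ 4 * K * exp (K * arccos x) := by
  have hx' : x ∈ Ioo (-1 : ℝ) 1 := ⟨by nlinarith, by nlinarith⟩
  have hs : 1 / 4 ≤ √(1 - x ^ 2) := le_sqrt_of_sq_le (by linarith)
  have h := sqrt_mul_abs_deriv_coshArccos hK hx'
  have hsinh : K * sinh (K * arccos x) ≤ K * exp (K * arccos x) := by
    gcongr
    exact (sinh_lt_cosh _).le.trans (cosh_le_exp (mul_nonneg hK (arccos_nonneg x)))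
  nlinarith [abs_nonneg (iteratedDeriv 1 (coshArccos K) x)]

theorem abs_deriv_coshArccos_le_of_nonneg {K : ℝ} (hK : 0 ≤ K) {x : ℝ} (hx : x ∈ Ico (0 : ℝ) 1) :
    |iteratedDeriv 1 (coshArccos K) x| ≤ 2 * K ^ 2 * exp (K * arccos x) := by
  have hx' : x ∈ Ioo (-1 : ℝ) 1 := ⟨by linarith [hx.1], hx.2⟩
  have hs : 0 < √(1 - x ^ 2) := sqrt_pos.2 (by nlinarith [hx.1, hx.2])
  have h := sqrt_mul_abs_deriv_coshArccos hK hx'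
  have hθ := arccos_le_pi_div_two_mul_sqrt hx.1
  have hsinh : K * sinh (K * arccos x) ≤ K * (K * (2 * √(1 - x ^ 2)) * exp (K * arccos x)) := by
    refine mul_le_mul_of_nonneg_left ((sinh_le_mul_exp _).trans ?_) hK
    gcongr
    nlinarith [pi_le_four]
  refine le_of_mul_le_mul_left ?_ hs
  nlinarith

theorem abs_iteratedDeriv_coshArccos_le_of_le_half {K : ℝ} (hK : 1 ≤ K) (n : ℕ) {x : ℝ}
    (hx : x ∈ Icc (0 : ℝ) (1 / 2)) :
    |iteratedDeriv n (coshArccos K) x| ≤ 4 ^ n * (n ! : ℝ) ^ 2 * K ^ n * exp (K * π / 2) := by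
  have hK₀ : 0 ≤ K := by linarith
  have hx2 : x ^ 2 ≤ 1 / 4 := by nlinarith [hx.1, hx.2]
  have hθ : exp (K * arccos x) ≤ exp (K * π / 2) := by
    rw [mul_div_assoc]; gcongr; exact arccos_le_pi_div_two.2 hx.1
  have hrec := fun m => iteratedDeriv_chebyshev_equation isOpen_Ioo (contDiffAt_coshArccos K)
    (coshArccos_chebyshev_equation K) m x ⟨by linarith [hx.1], by linarith [hx.2]⟩
  refine abs_le_of_chebyshev_recurrence (a := fun m => iteratedDeriv m (coshArccos K) x)
    hx2 hK (abs_of_nonneg (sq_nonneg K)).le hrec ?_ ?_ n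
  · simpa using (abs_coshArccos_le hK₀ x).trans hθ
  · simpa using (abs_deriv_coshArccos_le_of_sq_le hK₀ hx2).trans (by gcongr)

theorem abs_iteratedDeriv_coshArccos_le_of_half_le {K : ℝ} (hK : 1 ≤ K) (n : ℕ) :
    ∀ x ∈ Ico (1 / 2 : ℝ) 1, |iteratedDeriv n (coshArccos K) x| ≤
      4 ^ n * (n ! : ℝ) ^ 2 * (K ^ 2) ^ n * exp (K * π / 3) := by
  have hK₀ : 0 ≤ K := by linarith
  have hθ : ∀ t ∈ Ico (1 / 2 : ℝ) 1, exp (K * arccos t) ≤ exp (K * π / 3) := by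
    intro t ht
    rw [mul_div_assoc]; gcongr; exact arccos_le_pi_div_three ht.1
  refine abs_iteratedDeriv_le_near_one (contDiffAt_coshArccos K) (coshArccos_chebyshev_equation K)
    (by norm_num) (by nlinarith) (abs_of_nonneg (sq_nonneg K)).le
    (fun t ht => (abs_coshArccos_le hK₀ t).trans (hθ t ht)) (fun t ht => ?_) n
  have hderiv := abs_deriv_coshArccos_le_of_nonneg hK₀ ⟨by linarith [ht.1], ht.2⟩
  nlinarith [hθ t ht, exp_pos (K * arccos t)]

theorem sq_pow_mul_exp_pi_div_three_le (K : ℝ) (hK : 0 ≤ K) (n : ℕ) :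
    (K ^ 2) ^ n * exp (K * π / 3) ≤ (6 / π) ^ n * n ! * (K ^ n * exp (K * π / 2)) := by
  have hfact : K ^ n ≤ (6 / π) ^ n * n ! * exp (K * π / 6) := by
    have h := pow_div_factorial_le_exp _ (by positivity : 0 ≤ K * π / 6) n
    rw [div_le_iff₀ (by positivity)] at h
    calc K ^ n = (6 / π) ^ n * (K * π / 6) ^ n := by
          rw [← mul_pow]; congr 1; field_simp
      _ ≤ (6 / π) ^ n * (exp (K * π / 6) * n !) := by gcongr
      _ = (6 / π) ^ n * n ! * exp (K * π / 6) := by ring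
  calc (K ^ 2) ^ n * exp (K * π / 3) = K ^ n * K ^ n * exp (K * π / 3) := by ring
    _ ≤ K ^ n * ((6 / π) ^ n * n ! * exp (K * π / 6)) * exp (K * π / 3) := by gcongr
    _ = (6 / π) ^ n * n ! * (K ^ n * exp (K * π / 2)) := by
        rw [show K * π / 2 = K * π / 6 + K * π / 3 by ring, exp_add]; ring

theorem statement17_general (n : ℕ) :
    ∃ C : ℝ, ∀ K : ℝ, 1 ≤ K → ∀ x ∈ Set.Ioo (0 : ℝ) 1,
      |iteratedDeriv n (fun x : ℝ => Real.cosh (K * Real.arccos x)) x| ≤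
        C * K ^ n * Real.exp (K * π / 2) := by
  refine ⟨4 ^ n * (n ! : ℝ) ^ 2 * (1 + (6 / π) ^ n * n !), fun K hK x hx => ?_⟩
  have hT : 0 ≤ 4 ^ n * (n ! : ℝ) ^ 2 := by positivity
  have hE : 0 ≤ (6 / π) ^ n * n ! * (K ^ n * exp (K * π / 2)) := by positivity
  change |iteratedDeriv n (coshArccos K) x| ≤ _
  rcases le_or_gt x (1 / 2) with hleft | hright
  · calc _ ≤ 4 ^ n * (n ! : ℝ) ^ 2 * K ^ n * exp (K * π / 2) :=
          abs_iteratedDeriv_coshArccos_le_of_le_half hK n ⟨hx.1.le, hleft⟩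
      _ ≤ _ := by nlinarith [mul_nonneg hT hE]
  · calc _ ≤ 4 ^ n * (n ! : ℝ) ^ 2 * ((K ^ 2) ^ n * exp (K * π / 3)) := by
          rw [← mul_assoc]
          exact abs_iteratedDeriv_coshArccos_le_of_half_le hK n x ⟨hright.le, hx.2⟩
      _ ≤ 4 ^ n * (n ! : ℝ) ^ 2 * ((6 / π) ^ n * n ! * (K ^ n * exp (K * π / 2))) :=
          mul_le_mul_of_nonneg_left (sq_pow_mul_exp_pi_div_three_le K (by linarith) n) hT
      _ ≤ _ := by nlinarith [mul_nonneg hT (by positivity : 0 ≤ K ^ n * exp (K * π / 2))]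

/-- Lemma `l.1-new`: for each `n ≥ 1` there is `Cₙ < ∞` such that for
every `K ≥ 1` and `x ∈ (0,1)`: `|dⁿ/dxⁿ cosh(K·arccos x)| ≤ Cₙ Kⁿ e^{Kπ/2}`. -/
theorem statement17 (n : ℕ) (hn : 1 ≤ n) :
    ∃ C : ℝ, ∀ K : ℝ, 1 ≤ K → ∀ x ∈ Set.Ioo (0 : ℝ) 1,
      |iteratedDeriv n (fun x : ℝ => Real.cosh (K * Real.arccos x)) x| ≤
        C * K ^ n * Real.exp (K * π / 2) :=
  statement17_general n
end

section
/- For each integer n ≥ 1 there exists a constant Cₙ < ∞ such that for every real K ≥ 1 and every x ∈ (0,1): |dⁿ/dxⁿ (sinh(K·arccos x)/arccos x)| ≤ Cₙ·K^{n+1}·e^{Kπ/2}. -/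
/-!
For `t > 0`, `sinh (K t) / t = ∑ₘ K^(2m+1)/(2m+1)! · (t²)^m` is a power series in `arccos² x`
with nonnegative coefficients. The function `arccos²` is smooth on `(-1, 1)`, and near `x = 1` it
is the local inverse of the analytic function `w ↦ cos √w` (derivative `-1/2` at `0`), hence
smooth up to `1`. After cutting off with bump functions, near every point of `(0, 1)` it agrees
with one of two compactly supported `Cⁿ` functions `Q`. Differentiating term by term, Faà di
Bruno bounds `dⁿ(Q^m)` by `n! (m+1)ⁿ Rᵐ Dⁿ` where `|Q| ≤ R`, and `R = (π/2)²` on `(0, 1)`.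
The resulting series `∑ₘ K^(2m+1)/(2m+1)! · (m+1)ⁿ (π/2)^(2m)` is at most `C Kⁿ e^(Kπ/2)`
because `jⁿ ≤ n! bⁿ (1 + 2/b)^j` for `b = Kπ/2 ≥ 1`.
-/

open Real Filter Set Topology Nat

lemma natCast_pow_le_factorial_mul_pow_mul_one_add_two_div_pow (N : ℕ) {b : ℝ} (hb : 1 ≤ b)
    (j : ℕ) : (j : ℝ) ^ N ≤ N ! * b ^ N * (1 + 2 / b) ^ j := by
  have hb0 : 0 < b := by linarith
  have hexp : exp (1 / b) ≤ 1 + 2 / b := by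
    have h := Real.exp_bound' (x := 1 / b) (by positivity) (by rw [div_le_one hb0]; exact hb)
      (n := 1) one_pos
    norm_num at h
    simpa [one_div, div_eq_mul_inv, mul_comm] using h
  have hpow : ((j : ℝ) / b) ^ N ≤ N ! * exp (j / b) := by
    have h := pow_div_factorial_le_exp (x := (j : ℝ) / b) (by positivity) N
    rwa [div_le_iff₀ (by positivity), mul_comm] at h
  calc (j : ℝ) ^ N = b ^ N * ((j : ℝ) / b) ^ N := by
        rw [div_pow, mul_div_cancel₀ _ (by positivity)]
    _ ≤ b ^ N * (N ! * exp (1 / b) ^ j) := by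
        rw [← Real.exp_nat_mul, mul_one_div]
        gcongr
    _ ≤ N ! * b ^ N * (1 + 2 / b) ^ j := by
        rw [mul_left_comm, mul_assoc]
        gcongr

lemma tsum_sinh_coeff_mul_le (N : ℕ) {K r : ℝ} (hr : 0 < r) (hKr : 1 ≤ K * r) :
    ∑' m : ℕ, K ^ (2 * m + 1) / (2 * m + 1)! * (((m : ℝ) + 1) ^ N * (r ^ 2) ^ m) ≤
      r⁻¹ * N ! * (K * r) ^ N * exp (K * r + 2) := by
  have hK : 0 < K := pos_of_mul_pos_left (by linarith) hr.le
  set b := K * r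
  have hterm : ∀ m : ℕ, K ^ (2 * m + 1) / (2 * m + 1)! * (((m : ℝ) + 1) ^ N * (r ^ 2) ^ m) ≤
      r⁻¹ * N ! * b ^ N * ((b + 2) ^ (2 * m + 1) / (2 * m + 1)!) := by
    intro m
    have hm : ((m : ℝ) + 1) ^ N ≤ N ! * b ^ N * (1 + 2 / b) ^ (2 * m + 1) := by
      refine le_trans ?_ (natCast_pow_le_factorial_mul_pow_mul_one_add_two_div_pow N hKr _)
      gcongr
      push_cast
      linarith [(m.cast_nonneg : (0 : ℝ) ≤ m)]
    have hb2 : (b + 2) ^ (2 * m + 1) = b ^ (2 * m + 1) * (1 + 2 / b) ^ (2 * m + 1) := by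
      rw [← mul_pow]; congr 1; field_simp
    have hscale : K ^ (2 * m + 1) * (r ^ 2) ^ m = r⁻¹ * b ^ (2 * m + 1) := by
      rw [mul_pow, ← pow_mul]; field_simp; ring
    calc K ^ (2 * m + 1) / (2 * m + 1)! * (((m : ℝ) + 1) ^ N * (r ^ 2) ^ m)
        = r⁻¹ * b ^ (2 * m + 1) / (2 * m + 1)! * ((m : ℝ) + 1) ^ N := by rw [← hscale]; ring
      _ ≤ r⁻¹ * b ^ (2 * m + 1) / (2 * m + 1)! * (N ! * b ^ N * (1 + 2 / b) ^ (2 * m + 1)) := by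
          gcongr
      _ = r⁻¹ * N ! * b ^ N * ((b + 2) ^ (2 * m + 1) / (2 * m + 1)!) := by rw [hb2]; ring
  have hsinh := (hasSum_sinh (b + 2)).mul_left (r⁻¹ * N ! * b ^ N)
  calc _ ≤ r⁻¹ * N ! * b ^ N * sinh (b + 2) :=
        (hsinh.summable.of_nonneg_of_le (fun m => by positivity) hterm).tsum_le_tsum hterm
          hsinh.summable |>.trans_eq hsinh.tsum_eq
    _ ≤ r⁻¹ * N ! * b ^ N * exp (b + 2) := by
        gcongr
        rw [sinh_eq]
        linarith [exp_pos (-(b + 2)), exp_pos (b + 2)]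

lemma summable_abs_mul_succ_pow_mul_pow {a : ℕ → ℝ} {A B : ℝ} (ha : ∀ m, |a m| ≤ A * B ^ m / m !)
    (N : ℕ) (r : ℝ) : Summable fun m => |a m| * (((m : ℝ) + 1) ^ N * r ^ m) := by
  refine .of_norm_bounded
    (((summable_pow_div_factorial (exp 1 * B * |r|)).mul_left (A * N ! * exp 1))) fun m => ?_
  have hm : ((m : ℝ) + 1) ^ N ≤ N ! * exp (m + 1) := by
    have h := pow_div_factorial_le_exp (x := (m : ℝ) + 1) (by positivity) N
    rwa [div_le_iff₀ (by positivity), mul_comm] at h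
  calc ‖|a m| * (((m : ℝ) + 1) ^ N * r ^ m)‖ = |a m| * (((m : ℝ) + 1) ^ N * |r| ^ m) := by
        simp only [norm_mul, norm_pow, Real.norm_eq_abs, abs_abs,
          abs_of_nonneg (by positivity : (0 : ℝ) ≤ (m : ℝ) + 1)]
    _ ≤ A * B ^ m / m ! * (N ! * exp (m + 1) * |r| ^ m) := by
        gcongr
        · exact (abs_nonneg _).trans (ha m)
        · exact ha m
    _ = A * N ! * exp 1 * ((exp 1 * B * |r|) ^ m / m !) := by
        rw [exp_add, ← exp_one_pow]; ring

lemma exists_bound_iteratedFDeriv_of_hasCompactSupport {E F : Type*} [NormedAddCommGroup E]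
    [NormedSpace ℝ E] [NormedAddCommGroup F] [NormedSpace ℝ F] {f : E → F} {N : ℕ}
    (hf : HasCompactSupport f) (hf' : ContDiff ℝ N f) :
    ∃ D, ∀ i ≤ N, ∀ x, ‖iteratedFDeriv ℝ i f x‖ ≤ D := by
  choose D hD using fun i : Fin (N + 1) => (hf.iteratedFDeriv i).exists_bound_of_continuous
    (hf'.continuous_iteratedFDeriv (by exact_mod_cast i.is_le))
  refine ⟨∑ i, |D i|, fun i hi x => (hD ⟨i, by omega⟩ x).trans ?_⟩
  exact (le_abs_self _).trans
    (Finset.single_le_sum (fun j _ => abs_nonneg (D j)) (Finset.mem_univ _))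

lemma norm_iteratedFDeriv_mul_pow_comp_le {E : Type*} [NormedAddCommGroup E] [NormedSpace ℝ E]
    {Q : E → ℝ} {N k : ℕ} (hQ : ContDiff ℝ N Q) (hk : k ≤ N) (a : ℝ) (m : ℕ) {x : E} {R D : ℝ}
    (hR : 1 ≤ R) (hQx : |Q x| ≤ R) (hD : 1 ≤ D)
    (hQD : ∀ i, 1 ≤ i → i ≤ N → ‖iteratedFDeriv ℝ i Q x‖ ≤ D ^ i) :
    ‖iteratedFDeriv ℝ k (fun y => a * Q y ^ m) x‖ ≤
      N ! * (|a| * ((m + 1) ^ N * R ^ m)) * D ^ N := by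
  have hC : ∀ i ≤ k, ‖iteratedFDeriv ℝ i (fun z : ℝ => a * z ^ m) (Q x)‖ ≤
      |a| * ((m + 1) ^ N * R ^ m) := by
    intro i hi
    rw [norm_iteratedFDeriv_eq_norm_iteratedDeriv, iteratedDeriv_const_mul_field,
      iteratedDeriv_pow, Real.norm_eq_abs, abs_mul, abs_mul, abs_pow, Nat.abs_cast]
    gcongr
    · calc (m.descFactorial i : ℝ) ≤ (m : ℝ) ^ i := by exact_mod_cast m.descFactorial_le_pow i
        _ ≤ (m + 1) ^ N := (pow_le_pow_left₀ (by positivity) (by linarith) i).trans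
          (pow_le_pow_right₀ (by linarith) (hi.trans hk))
    · exact (pow_le_pow_left₀ (abs_nonneg _) hQx _).trans (pow_le_pow_right₀ hR (m.sub_le i))
  calc ‖iteratedFDeriv ℝ k ((fun z : ℝ => a * z ^ m) ∘ Q) x‖
      ≤ k ! * (|a| * ((m + 1) ^ N * R ^ m)) * D ^ k :=
        norm_iteratedFDeriv_comp_le (contDiff_const.mul (contDiff_id.pow m)) hQ
          (by exact_mod_cast hk) x hC fun i hi hik => hQD i hi (hik.trans hk)
    _ ≤ N ! * (|a| * ((m + 1) ^ N * R ^ m)) * D ^ N := by gcongr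

lemma abs_iteratedDeriv_tsum_mul_pow_comp_le {N : ℕ} {Q : ℝ → ℝ} (hQ : ContDiff ℝ N Q) {D : ℝ}
    (hD : 1 ≤ D) (hQD : ∀ i ≤ N, ∀ x, ‖iteratedFDeriv ℝ i Q x‖ ≤ D) {a : ℕ → ℝ}
    (ha : ∀ r, Summable fun m => |a m| * (((m : ℝ) + 1) ^ N * r ^ m)) {x R : ℝ} (hR : 1 ≤ R)
    (hQx : |Q x| ≤ R) :
    |iteratedDeriv N (fun y => ∑' m, a m * Q y ^ m) x| ≤
      N ! * D ^ N * ∑' m, |a m| * (((m : ℝ) + 1) ^ N * R ^ m) := by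
  have hQD' (y : ℝ) (i : ℕ) (hi : 1 ≤ i) (hiN : i ≤ N) : ‖iteratedFDeriv ℝ i Q y‖ ≤ D ^ i :=
    (hQD i hiN y).trans (le_self_pow₀ hD (by omega))
  have hglobal (k m : ℕ) (y : ℝ) (hk : (k : ℕ∞) ≤ N) :
      ‖iteratedFDeriv ℝ k (fun y => a m * Q y ^ m) y‖ ≤
        N ! * (|a m| * (((m : ℝ) + 1) ^ N * D ^ m)) * D ^ N :=
    norm_iteratedFDeriv_mul_pow_comp_le hQ (by exact_mod_cast hk) (a m) m hD
      (by simpa using hQD 0 N.zero_le y) hD (hQD' y)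
  have hlocal (m : ℕ) : ‖iteratedFDeriv ℝ N (fun y => a m * Q y ^ m) x‖ ≤
      N ! * (|a m| * (((m : ℝ) + 1) ^ N * R ^ m)) * D ^ N :=
    norm_iteratedFDeriv_mul_pow_comp_le hQ le_rfl (a m) m hR hQx hD (hQD' x)
  have hsumR := ((ha R).mul_left (N ! : ℝ)).mul_right (D ^ N)
  rw [← Real.norm_eq_abs, ← norm_iteratedFDeriv_eq_norm_iteratedDeriv,
    iteratedFDeriv_tsum_apply (fun m => contDiff_const.mul (hQ.pow m))
      (fun _ _ => ((ha D).mul_left (N ! : ℝ)).mul_right (D ^ N)) hglobal le_rfl]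
  calc _ ≤ ∑' m, ‖iteratedFDeriv ℝ N (fun y => a m * Q y ^ m) x‖ :=
        norm_tsum_le_tsum_norm (hsumR.of_nonneg_of_le (fun _ => norm_nonneg _) hlocal)
    _ ≤ ∑' m, N ! * (|a m| * (((m : ℝ) + 1) ^ N * R ^ m)) * D ^ N :=
        (hsumR.of_nonneg_of_le (fun _ => norm_nonneg _) hlocal).tsum_le_tsum hlocal hsumR
    _ = N ! * D ^ N * ∑' m, |a m| * (((m : ℝ) + 1) ^ N * R ^ m) := by
        rw [tsum_mul_right, tsum_mul_left]; ring

lemma ContDiffOn.exists_contDiff_hasCompactSupport_eqOn {E : Type*} [NormedAddCommGroup E]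
    [NormedSpace ℝ E] [FiniteDimensional ℝ E] {n : ℕ∞} {g : E → ℝ} {c : E} {r R : ℝ}
    (hg : ContDiffOn ℝ n g (Metric.ball c R)) (hr : 0 < r) (hrR : r < R) :
    ∃ Q : E → ℝ, ContDiff ℝ n Q ∧ HasCompactSupport Q ∧ EqOn Q g (Metric.closedBall c r) := by
  let b : ContDiffBump c := ⟨r, (r + R) / 2, hr, by linarith⟩
  refine ⟨fun x => b x * g x, contDiff_iff_contDiffAt.2 fun y => ?_,
    b.hasCompactSupport.mul_right, fun x hx => by simp [b.one_of_mem_closedBall hx]⟩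
  by_cases hy : y ∈ Metric.ball c R
  · exact b.contDiffAt.mul (hg.contDiffAt (Metric.isOpen_ball.mem_nhds hy))
  · refine (contDiffAt_const (c := (0 : ℝ))).congr_of_eventuallyEq ?_
    have hfar : (Metric.closedBall c b.rOut)ᶜ ∈ 𝓝 y :=
      Metric.isClosed_closedBall.isOpen_compl.mem_nhds fun h =>
        hy (Metric.closedBall_subset_ball (by show (r + R) / 2 < R; linarith) h)
    filter_upwards [hfar] with x hx
    simp only [mem_compl_iff, Metric.mem_closedBall, not_le] at hx
    simp [b.zero_of_le_dist hx.le]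

lemma exists_analyticAt_eventuallyEq_arccos_sq :
    ∃ g : ℝ → ℝ, AnalyticAt ℝ g 1 ∧ ∀ᶠ x in 𝓝[≤] 1, g x = arccos x ^ 2 := by
  set p := FormalMultilinearSeries.ofScalars ℝ fun m : ℕ => (-1 : ℝ) ^ m / (2 * m)!
  have hp : HasFPowerSeriesOnBall p.sum p 0 p.radius := by
    refine p.hasFPowerSeriesOnBall (lt_of_lt_of_le one_pos (p.le_radius_of_bound 1 fun m => ?_))
    rw [FormalMultilinearSeries.ofScalars_norm, NNReal.coe_one, one_pow, mul_one, norm_div,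
      norm_pow, norm_neg, norm_one, one_pow, RCLike.norm_natCast]
    exact div_le_one_of_le₀ (by exact_mod_cast (2 * m).factorial_pos) (by positivity)
  have hcos (t : ℝ) : p.sum (t ^ 2) = cos t := by
    rw [← FormalMultilinearSeries.ofScalarsSum, FormalMultilinearSeries.ofScalars_sum_eq]
    refine (Real.hasSum_cos t).tsum_eq ▸ tsum_congr fun m => ?_
    rw [smul_eq_mul, ← pow_mul]; ring
  have hderiv : deriv p.sum 0 ≠ 0 := by
    rw [hp.hasFPowerSeriesAt.deriv]
    simp [p, FormalMultilinearSeries.ofScalars]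
  have hA := hp.analyticAt
  have h1 : p.sum 0 = 1 := by simpa using hcos 0
  refine ⟨_, h1 ▸ hA.analyticAt_localInverse hderiv, ?_⟩
  have hlim : Tendsto (fun x => arccos x ^ 2) (𝓝[≤] 1) (𝓝 0) := by
    simpa using ((continuous_arccos.fun_pow 2).tendsto 1).mono_left nhdsWithin_le_nhds
  filter_upwards [hlim.eventually (hA.hasStrictDerivAt.eventually_left_inverse hderiv),
    self_mem_nhdsWithin, nhdsWithin_le_nhds (Ioi_mem_nhds (by norm_num : (-1 : ℝ) < 1))]
    with x hx hx1 hx2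
  rw [← hx, hcos, cos_arccos (le_of_lt hx2) hx1]

lemma exists_contDiff_hasCompactSupport_eventuallyEq_arccos_sq (n : ℕ) :
    ∃ Q₁ Q₂ : ℝ → ℝ, ContDiff ℝ n Q₁ ∧ HasCompactSupport Q₁ ∧ ContDiff ℝ n Q₂ ∧
      HasCompactSupport Q₂ ∧ ∀ x ∈ Ioo (0 : ℝ) 1,
        Q₁ =ᶠ[𝓝 x] (fun y => arccos y ^ 2) ∨ Q₂ =ᶠ[𝓝 x] (fun y => arccos y ^ 2) := by
  obtain ⟨g, hg, hg_eq⟩ := exists_analyticAt_eventuallyEq_arccos_sq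
  obtain ⟨δ₁, hδ₁, hg⟩ := hg.exists_ball_analyticOnNhd
  obtain ⟨l, hl : l < 1, hl_eq⟩ := mem_nhdsLE_iff_exists_Ioc_subset.1 hg_eq
  set δ := min (min δ₁ (1 - l)) 1
  have hδ : 0 < δ := lt_min (lt_min hδ₁ (by linarith)) one_pos
  have hδ₁ : δ ≤ δ₁ := (min_le_left _ _).trans (min_le_left _ _)
  have hδl : δ ≤ 1 - l := (min_le_left _ _).trans (min_le_right _ _)
  have hδ1 : δ ≤ 1 := min_le_right _ _
  have harccos : ContDiffOn ℝ n (fun y => arccos y ^ 2) (Metric.ball 0 1) := fun y hy => by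
    rw [mem_ball_zero_iff, Real.norm_eq_abs, abs_lt] at hy
    exact ((contDiffAt_arccos hy.1.ne' hy.2.ne).pow 2).contDiffWithinAt
  obtain ⟨Q₁, hQ₁, hQ₁c, hQ₁_eq⟩ :=
    harccos.exists_contDiff_hasCompactSupport_eqOn (r := 1 - δ / 2) (by linarith) (by linarith)
  obtain ⟨Q₂, hQ₂, hQ₂c, hQ₂_eq⟩ := ((hg.contDiffOn_of_completeSpace (n := n)).mono
    (Metric.ball_subset_ball hδ₁)).exists_contDiff_hasCompactSupport_eqOn (r := 3 * δ / 4)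
      (by linarith) (by linarith)
  refine ⟨Q₁, Q₂, hQ₁, hQ₁c, hQ₂, hQ₂c, fun x hx => ?_⟩
  rcases lt_or_ge x (1 - δ / 2) with h | h
  · left
    filter_upwards [Ioo_mem_nhds hx.1 h] with y hy
    refine hQ₁_eq ?_
    rw [mem_closedBall_zero_iff, Real.norm_eq_abs, abs_le]
    constructor <;> linarith [hy.1, hy.2]
  · right
    filter_upwards [Ioo_mem_nhds (by linarith : 1 - 3 * δ / 4 < x) hx.2] with y hy
    rw [hQ₂_eq, hl_eq ⟨by linarith [hy.1], hy.2.le⟩]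
    rw [Metric.mem_closedBall, Real.dist_eq, abs_le]
    constructor <;> linarith [hy.1, hy.2]

lemma sinh_mul_div_eq_tsum (K : ℝ) {t : ℝ} (ht : t ≠ 0) :
    sinh (K * t) / t = ∑' m : ℕ, K ^ (2 * m + 1) / (2 * m + 1)! * (t ^ 2) ^ m := by
  refine ((hasSum_sinh (K * t)).div_const t).tsum_eq.symm.trans (tsum_congr fun m => ?_)
  rw [mul_pow, ← pow_mul, pow_succ t]
  field_simp

lemma exists_bound_iteratedDeriv_sinh_mul_arccos_div (n : ℕ) {Q : ℝ → ℝ}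
    (hQ : ContDiff ℝ n Q) (hQc : HasCompactSupport Q) :
    ∃ C, ∀ K, 1 ≤ K → ∀ x ∈ Ioo (0 : ℝ) 1, Q =ᶠ[𝓝 x] (fun y => arccos y ^ 2) →
      |iteratedDeriv n (fun y => sinh (K * arccos y) / arccos y) x| ≤
        C * K ^ (n + 1) * exp (K * π / 2) := by
  obtain ⟨D, hD⟩ := exists_bound_iteratedFDeriv_of_hasCompactSupport hQc hQ
  set C := n ! * max D 1 ^ n * ((π / 2)⁻¹ * n ! * (π / 2) ^ n * exp 2)
  refine ⟨C, fun K hK x hx hQx => ?_⟩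
  have hpi : 1 ≤ π / 2 := by linarith [pi_gt_three]
  have hf : (fun y => sinh (K * arccos y) / arccos y) =ᶠ[𝓝 x]
      fun y => ∑' m : ℕ, K ^ (2 * m + 1) / (2 * m + 1)! * Q y ^ m := by
    filter_upwards [hQx, Iio_mem_nhds hx.2] with y hQy hy
    rw [hQy, sinh_mul_div_eq_tsum K (arccos_pos.2 hy).ne']
  have hQx_le : |Q x| ≤ (π / 2) ^ 2 := by
    rw [hQx.eq_of_nhds, abs_of_nonneg (sq_nonneg _)]
    exact pow_le_pow_left₀ (arccos_nonneg x) (arccos_le_pi_div_two.2 hx.1.le) 2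
  have habs (m : ℕ) : |K ^ (2 * m + 1) / ((2 * m + 1)! : ℝ)| = K ^ (2 * m + 1) / (2 * m + 1)! :=
    abs_of_nonneg (by positivity)
  have ha (m : ℕ) : |K ^ (2 * m + 1) / ((2 * m + 1)! : ℝ)| ≤ K * (K ^ 2) ^ m / m ! := by
    rw [habs, ← pow_mul, ← pow_succ' K (2 * m)]
    gcongr
    omega
  rw [hf.iteratedDeriv_eq]
  calc _ ≤ n ! * max D 1 ^ n * ∑' m : ℕ,
        |K ^ (2 * m + 1) / ((2 * m + 1)! : ℝ)| * (((m : ℝ) + 1) ^ n * ((π / 2) ^ 2) ^ m) :=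
        abs_iteratedDeriv_tsum_mul_pow_comp_le hQ (le_max_right _ _)
          (fun i hi y => (hD i hi y).trans (le_max_left _ _))
          (summable_abs_mul_succ_pow_mul_pow ha n) (one_le_pow₀ hpi) hQx_le
    _ ≤ n ! * max D 1 ^ n * ((π / 2)⁻¹ * n ! * (K * (π / 2)) ^ n * exp (K * (π / 2) + 2)) := by
        simp only [habs]
        gcongr
        exact tsum_sinh_coeff_mul_le n (by positivity) (by nlinarith)
    _ = C * K ^ n * exp (K * π / 2) := by
        rw [mul_pow, exp_add, show K * (π / 2) = K * π / 2 by ring]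
        ring
    _ ≤ C * K ^ (n + 1) * exp (K * π / 2) := by
        gcongr
        exact n.le_succ

theorem statement18_general (n : ℕ) :
    ∃ C : ℝ, ∀ K : ℝ, 1 ≤ K → ∀ x ∈ Set.Ioo (0 : ℝ) 1,
      |iteratedDeriv n (fun x : ℝ => Real.sinh (K * Real.arccos x) / Real.arccos x) x| ≤
        C * K ^ (n + 1) * Real.exp (K * π / 2) := by
  obtain ⟨Q₁, Q₂, hQ₁, hQ₁c, hQ₂, hQ₂c, hQ⟩ :=
    exists_contDiff_hasCompactSupport_eventuallyEq_arccos_sq n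
  obtain ⟨C₁, hC₁⟩ := exists_bound_iteratedDeriv_sinh_mul_arccos_div n hQ₁ hQ₁c
  obtain ⟨C₂, hC₂⟩ := exists_bound_iteratedDeriv_sinh_mul_arccos_div n hQ₂ hQ₂c
  refine ⟨max C₁ C₂, fun K hK x hx => ?_⟩
  rcases hQ x hx with h | h
  · exact (hC₁ K hK x hx h).trans (by gcongr; exact le_max_left _ _)
  · exact (hC₂ K hK x hx h).trans (by gcongr; exact le_max_right _ _)

/-- Lemma `l.2-new`: for each `n ≥ 1` there is `Cₙ < ∞` such that for
every `K ≥ 1` and `x ∈ (0,1)`: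
`|dⁿ/dxⁿ (sinh(K·arccos x)/arccos x)| ≤ Cₙ K^{n+1} e^{Kπ/2}`. -/
theorem statement18 (n : ℕ) (hn : 1 ≤ n) :
    ∃ C : ℝ, ∀ K : ℝ, 1 ≤ K → ∀ x ∈ Set.Ioo (0 : ℝ) 1,
      |iteratedDeriv n (fun x : ℝ => Real.sinh (K * Real.arccos x) / Real.arccos x) x| ≤
        C * K ^ (n + 1) * Real.exp (K * π / 2) :=
  statement18_general n
end
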